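/- arXiv:1810.09427 — 12 statements merged into one kernel-verified Lean document; each statement's English description precedes it below -/
import Mathlib

section
/- Let k ≥ 2 and s ≥ 1 be integers, and let r_1, …, r_s be integers with k ≥ r_i ≥ 0 and r_i ≠ 1 for each i ∈ {1, …, s}. Let D be a strongly connected digraph such that every directed cycle of D has length congruent to r_i modulo k for some i ∈ {1, …, s}. Then χ_A(D) ≤ 2s + 1. -/
/-!
A digraph on a finite vertex type `V` is given by its arc relation `A : V → V → Prop`,
which is irreflexive (loopless).
-/

/-- `CycleOn A U ℓ` : there is a directed cycle of length `ℓ` (a sequence of `ℓ` distinct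
vertices, cyclically consecutive ones joined by arcs) all of whose vertices lie in `U`. -/
def CycleOn {V : Type*} (A : V → V → Prop) (U : Set V) (ℓ : ℕ) : Prop :=
  2 ≤ ℓ ∧ ∃ u : ZMod ℓ → V, Function.Injective u ∧ (∀ i, u i ∈ U) ∧ ∀ i, A (u i) (u (i + 1))

/-- `HasCycleLen A ℓ` : the digraph has a directed cycle of length `ℓ`. -/
def HasCycleLen {V : Type*} (A : V → V → Prop) (ℓ : ℕ) : Prop :=
  CycleOn A Set.univ ℓ

/-- A set of vertices is acyclic if the induced subdigraph has no directed cycle. -/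
def AcyclicSet {V : Type*} (A : V → V → Prop) (U : Set V) : Prop :=
  ∀ ℓ, ¬ CycleOn A U ℓ

/-- The dichromatic number: the least `k` such that the vertices can be colored with `k`
colors so that every color class is acyclic. -/
noncomputable def dichromatic {V : Type*} (A : V → V → Prop) : ℕ :=
  sInf {k | ∃ c : V → Fin k, ∀ i, AcyclicSet A {v | c v = i}}

/-- Strong connectivity: every vertex is reachable from every other by a directed path. -/
def StronglyConnected {V : Type*} (A : V → V → Prop) : Prop :=
  ∀ u v, Relation.ReflTransGen A u v

section Paths
variable {V : Type*} (A : V → V → Prop)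

/-- An injective directed path of length `t` from `b` to `a` with all vertices in `S`. -/
def InjPathOn (S : Set V) (b a : V) (t : ℕ) : Prop :=
  ∃ f : ℕ → V, f 0 = b ∧ f t = a ∧ (∀ i, i ≤ t → f i ∈ S) ∧
    (∀ i, i < t → A (f i) (f (i + 1))) ∧
    (∀ i, i ≤ t → ∀ j, j ≤ t → f i = f j → i = j)

variable {A}

lemma InjPathOn.mono {S S' : Set V} (hSS : S ⊆ S') {b a : V} {t : ℕ}
    (h : InjPathOn A S b a t) : InjPathOn A S' b a t := by
  obtain ⟨f, h0, h1, hmem, harc, hinj⟩ := h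
  exact ⟨f, h0, h1, fun i hi => hSS (hmem i hi), harc, hinj⟩

lemma injPathOn_refl {S : Set V} {x : V} (hx : x ∈ S) : InjPathOn A S x x 0 :=
  ⟨fun _ => x, rfl, rfl, fun _ _ => hx, fun i hi => absurd hi (Nat.not_lt_zero i),
    fun i hi j hj _ => by omega⟩

lemma InjPathOn.prepend {S : Set V} {x y a : V} {t : ℕ}
    (hxy : A x y) (hx : x ∉ S) (hp : InjPathOn A S y a t) :
    InjPathOn A (insert x S) x a (t + 1) := by
  obtain ⟨f, h0, h1, hmem, harc, hinj⟩ := hp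
  refine ⟨fun n => if n = 0 then x else f (n - 1), by simp, ?_, ?_, ?_, ?_⟩
  · simp [h1]
  · intro i hi
    by_cases h : i = 0
    · simp [h]
    · simp only [if_neg h]
      exact Set.mem_insert_of_mem _ (hmem _ (by omega))
  · intro i hi
    by_cases h : i = 0
    · subst h; simpa [h0] using hxy
    · obtain ⟨m, rfl⟩ := Nat.exists_eq_succ_of_ne_zero h
      simpa using harc m (by omega)
  · intro i hi j hj hij
    simp only at hij
    by_cases h : i = 0 <;> by_cases h' : j = 0
    · omega
    · exfalso; apply hx
      rw [if_pos h, if_neg h'] at hij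
      rw [hij]; exact hmem _ (by omega)
    · exfalso; apply hx
      rw [if_neg h, if_pos h'] at hij
      rw [← hij]; exact hmem _ (by omega)
    · rw [if_neg h, if_neg h'] at hij
      have := hinj (i - 1) (by omega) (j - 1) (by omega) hij
      omega

/-- Closing an injective path of positive length with an arc gives a directed cycle. -/
lemma InjPathOn.toCycle {S : Set V} {b a : V} {t : ℕ} (ht : 1 ≤ t)
    (hp : InjPathOn A S b a t) (hab : A a b) : HasCycleLen A (t + 1) := by
  obtain ⟨f, h0, h1, hmem, harc, hinj⟩ := hp
  haveI : NeZero (t + 1) := ⟨Nat.succ_ne_zero t⟩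
  refine ⟨by omega, fun z => f z.val, ?_, fun _ => Set.mem_univ _, ?_⟩
  · intro z₁ z₂ h
    have := hinj z₁.val (by have := ZMod.val_lt z₁; omega) z₂.val
      (by have := ZMod.val_lt z₂; omega) h
    exact ZMod.val_injective _ (by exact this)
  · intro i
    have hvi : i.val < t + 1 := ZMod.val_lt i
    have hcast : i = ((i.val : ℕ) : ZMod (t + 1)) := (ZMod.natCast_rightInverse i).symm
    have h2 : i + 1 = ((i.val + 1 : ℕ) : ZMod (t + 1)) := by
      rw [Nat.cast_add, Nat.cast_one, ← hcast]
    have hval : (i + 1).val = (i.val + 1) % (t + 1) := by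
      rw [h2, ZMod.val_natCast]
    show A (f i.val) (f (i + 1).val)
    by_cases h : i.val = t
    · have h3 : (i + 1).val = 0 := by rw [hval, h, Nat.mod_self]
      rw [h3, h, h1, h0]; exact hab
    · have h3 : (i + 1).val = i.val + 1 := by rw [hval, Nat.mod_eq_of_lt (by omega)]
      rw [h3]; exact harc i.val (by omega)

/-- If a cyclic sequence meets `X` and leaves `X`, some consecutive pair exits `X`. -/
lemma cycle_exit {ℓ : ℕ} [NeZero ℓ] (u : ZMod ℓ → V) (X : Set V) {i₀ j₀ : ZMod ℓ}
    (h₀ : u i₀ ∈ X) (h₁ : u j₀ ∉ X) : ∃ p, u p ∈ X ∧ u (p + 1) ∉ X := by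
  by_contra h
  push_neg at h
  have key : ∀ n : ℕ, u (i₀ + n) ∈ X := by
    intro n
    induction n with
    | zero => simpa using h₀
    | succ m ih =>
        have := h _ ih
        have e : i₀ + (↑(m + 1) : ZMod ℓ) = i₀ + m + 1 := by push_cast; ring
        rwa [e]
  apply h₁
  have := key (j₀ - i₀).val
  rwa [ZMod.natCast_rightInverse (j₀ - i₀), add_sub_cancel] at this

end Paths

section Tree
variable {V : Type*} {A : V → V → Prop}

/-- DFS tree existence: from root `x` inside the available set `R`, there is a visited set
`Vis` (closed under arcs inside `R`), a depth function, and an ancestor relation such that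
ancestors are joined to descendants by injective paths realizing depth differences, the root
is an ancestor of everything, and every cycle inside `Vis` contains a back arc. -/
lemma dfs_tree : ∀ (n : ℕ) (R : Finset V) (x : V), R.card ≤ n → x ∈ R →
    ∃ (Vis : Finset V) (dep : V → ℕ) (anc : V → V → Prop),
      x ∈ Vis ∧ Vis ⊆ R ∧
      (∀ u ∈ Vis, ∀ v ∈ R, A u v → v ∈ Vis) ∧
      dep x = 0 ∧
      (∀ b a, anc b a → b ∈ Vis ∧ a ∈ Vis ∧ dep b ≤ dep a ∧
        InjPathOn A (↑Vis) b a (dep a - dep b)) ∧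
      (∀ a ∈ Vis, anc x a) ∧
      (∀ (ℓ : ℕ) (u : ZMod ℓ → V), 2 ≤ ℓ → Function.Injective u → (∀ i, u i ∈ Vis) →
        (∀ i, A (u i) (u (i + 1))) →
        ∃ p, anc (u (p + 1)) (u p) ∧ dep (u (p + 1)) < dep (u p)) := by
  intro n
  classical
  induction n with
  | zero =>
      intro R x hcard hx
      exact absurd (Finset.card_pos.mpr ⟨x, hx⟩) (by omega)
  | succ n ih =>
      intro R x hcard hx
      by_cases hy : ∃ y, y ∈ R ∧ y ≠ x ∧ A x y
      · obtain ⟨y, hyR, hyx, hxy⟩ := hy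
        have h1 : (R.erase x).card ≤ n := by
          rw [Finset.card_erase_of_mem hx]; omega
        obtain ⟨V₁, d₁, a₁, hyV₁, hsub₁, hcl₁, hd₁, hP₁, hroot₁, hcyc₁⟩ :=
          ih (R.erase x) y h1 (Finset.mem_erase.mpr ⟨hyx, hyR⟩)
        have hxV₁ : x ∉ V₁ := fun h => (Finset.mem_erase.mp (hsub₁ h)).1 rfl
        have hV₁R : V₁ ⊆ R := hsub₁.trans (Finset.erase_subset x R)
        have hxR₂ : x ∈ R \ V₁ := Finset.mem_sdiff.mpr ⟨hx, hxV₁⟩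
        have h2 : (R \ V₁).card ≤ n := by
          have hss : R \ V₁ ⊂ R := by
            refine ⟨Finset.sdiff_subset, fun hsub => ?_⟩
            have := Finset.mem_sdiff.mp (hsub hyR)
            exact this.2 hyV₁
          have := Finset.card_lt_card hss
          omega
        obtain ⟨V₂, d₂, a₂, hxV₂, hsub₂, hcl₂, hd₂, hP₂, hroot₂, hcyc₂⟩ :=
          ih (R \ V₁) x h2 hxR₂
        have hdisj : ∀ v ∈ V₂, v ∉ V₁ := fun v hv => (Finset.mem_sdiff.mp (hsub₂ hv)).2
        refine ⟨V₁ ∪ V₂, fun v => if v ∈ V₁ then d₁ v + 1 else d₂ v,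
          fun b a => a₁ b a ∨ a₂ b a ∨ (b = x ∧ a ∈ V₁), ?_, ?_, ?_, ?_, ?_, ?_, ?_⟩
        · exact Finset.mem_union_right _ hxV₂
        · exact Finset.union_subset hV₁R (hsub₂.trans Finset.sdiff_subset)
        · -- closure
          intro u hu v hvR harc
          rcases Finset.mem_union.mp hu with hu1 | hu2
          · by_cases hvx : v = x
            · exact Finset.mem_union_right _ (hvx ▸ hxV₂)
            · exact Finset.mem_union_left _
                (hcl₁ u hu1 v (Finset.mem_erase.mpr ⟨hvx, hvR⟩) harc)
          · by_cases hv1 : v ∈ V₁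
            · exact Finset.mem_union_left _ hv1
            · exact Finset.mem_union_right _
                (hcl₂ u hu2 v (Finset.mem_sdiff.mpr ⟨hvR, hv1⟩) harc)
        · simp [hxV₁, hd₂]
        · -- ancestor paths
          rintro b a (h | h | ⟨hbx, ha⟩)
          · obtain ⟨hb, ha, hle, hpath⟩ := hP₁ b a h
            refine ⟨Finset.mem_union_left _ hb, Finset.mem_union_left _ ha, ?_, ?_⟩
            · simp only [if_pos hb, if_pos ha]; omega
            · have : (if a ∈ V₁ then d₁ a + 1 else d₂ a) - (if b ∈ V₁ then d₁ b + 1 else d₂ b)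
                  = d₁ a - d₁ b := by rw [if_pos hb, if_pos ha]; omega
              rw [this]
              exact hpath.mono (Finset.coe_subset.mpr Finset.subset_union_left)
          · obtain ⟨hb, ha, hle, hpath⟩ := hP₂ b a h
            refine ⟨Finset.mem_union_right _ hb, Finset.mem_union_right _ ha, ?_, ?_⟩
            · simp only [if_neg (hdisj b hb), if_neg (hdisj a ha)]; omega
            · have : (if a ∈ V₁ then d₁ a + 1 else d₂ a) - (if b ∈ V₁ then d₁ b + 1 else d₂ b)
                  = d₂ a - d₂ b := by rw [if_neg (hdisj b hb), if_neg (hdisj a ha)]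
              rw [this]
              exact hpath.mono (Finset.coe_subset.mpr Finset.subset_union_right)
          · -- b = x, a ∈ V₁
            rw [hbx]
            obtain ⟨hyb, ha', hley, hpath⟩ := hP₁ y a (hroot₁ a ha)
            have hdep : (if a ∈ V₁ then d₁ a + 1 else d₂ a) - (if x ∈ V₁ then d₁ x + 1 else d₂ x)
                = (d₁ a - d₁ y) + 1 := by
              rw [if_pos ha, if_neg hxV₁, hd₂, hd₁]; omega
            refine ⟨Finset.mem_union_right _ hxV₂, Finset.mem_union_left _ ha, ?_, ?_⟩
            · simp only [if_pos ha, if_neg hxV₁, hd₂]; omega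
            · rw [hdep]
              have := (hpath.prepend hxy (by simpa using hxV₁) :
                InjPathOn A (insert x ↑V₁) x a (d₁ a - d₁ y + 1))
              refine this.mono ?_
              intro z hz
              rcases Set.mem_insert_iff.mp hz with rfl | hz
              · exact Finset.mem_coe.mpr (Finset.mem_union_right _ hxV₂)
              · exact Finset.mem_coe.mpr (Finset.mem_union_left _ (Finset.mem_coe.mp hz))
        · -- root is ancestor of all
          intro a ha
          rcases Finset.mem_union.mp ha with h | h
          · exact Or.inr (Or.inr ⟨rfl, h⟩)
          · exact Or.inr (Or.inl (hroot₂ a h))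
        · -- back arcs for cycles
          intro ℓ u hℓ hinj hmem harc
          haveI : NeZero ℓ := ⟨by omega⟩
          by_cases hall1 : ∀ i, u i ∈ V₁
          · obtain ⟨p, hp, hlt⟩ := hcyc₁ ℓ u hℓ hinj hall1 harc
            refine ⟨p, Or.inl hp, ?_⟩
            simp only [if_pos (hall1 _)]; omega
          · push_neg at hall1
            obtain ⟨j, hj⟩ := hall1
            by_cases hall2 : ∀ i, u i ∈ V₂
            · obtain ⟨p, hp, hlt⟩ := hcyc₂ ℓ u hℓ hinj hall2 harc
              refine ⟨p, Or.inr (Or.inl hp), ?_⟩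
              simp only [if_neg (hdisj _ (hall2 _))]; omega
            · push_neg at hall2
              obtain ⟨j', hj'⟩ := hall2
              have hj'1 : u j' ∈ V₁ := by
                rcases Finset.mem_union.mp (hmem j') with h | h
                · exact h
                · exact absurd h hj'
              obtain ⟨p, hpin, hpout⟩ := cycle_exit u (↑V₁) (Finset.mem_coe.mpr hj'1)
                (fun h => hj (Finset.mem_coe.mp h))
              have hpin' : u p ∈ V₁ := Finset.mem_coe.mp hpin
              have hpR : u (p + 1) ∈ R := by
                rcases Finset.mem_union.mp (hmem (p + 1)) with h | h
                · exact hV₁R h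
                · exact (hsub₂.trans Finset.sdiff_subset) h
              have hpx : u (p + 1) = x := by
                by_contra hne
                apply hpout
                exact Finset.mem_coe.mpr (hcl₁ (u p) hpin' (u (p + 1))
                  (Finset.mem_erase.mpr ⟨hne, hpR⟩) (harc p))
              refine ⟨p, Or.inr (Or.inr ⟨hpx, hpin'⟩), ?_⟩
              simp only [hpx, if_pos hpin', if_neg hxV₁, hd₂]
              omega
      · -- base : no fresh out-neighbour of x
        refine ⟨{x}, fun _ => 0, fun b a => b = x ∧ a = x, Finset.mem_singleton_self x,
          Finset.singleton_subset_iff.mpr hx, ?_, rfl, ?_, ?_, ?_⟩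
        · intro u hu v hvR harc
          rw [Finset.mem_singleton] at hu
          subst hu
          rw [Finset.mem_singleton]
          by_contra hne
          exact hy ⟨v, hvR, hne, harc⟩
        · rintro b a ⟨rfl, rfl⟩
          exact ⟨Finset.mem_singleton_self _, Finset.mem_singleton_self _, le_refl _,
            injPathOn_refl (by simp)⟩
        · intro a ha
          rw [Finset.mem_singleton] at ha
          exact ⟨rfl, ha⟩
        · intro ℓ u hℓ hinj hmem harc
          exfalso
          haveI : Fact (1 < ℓ) := ⟨by omega⟩
          have h0 : u 0 = x := Finset.mem_singleton.mp (hmem 0)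
          have h1 : u 1 = x := Finset.mem_singleton.mp (hmem 1)
          have : (0 : ZMod ℓ) = 1 := hinj (h0.trans h1.symm)
          have := congrArg ZMod.val this
          rw [ZMod.val_zero, ZMod.val_one ℓ] at this
          omega

end Tree

section Forest
variable {V : Type*} {A : V → V → Prop}

/-- DFS forest: a depth function and ancestor relation on the whole set `W` such that every
cycle inside `W` has a back arc, and ancestors are joined by injective paths realizing
depth differences. -/
lemma dfs_forest : ∀ (n : ℕ) (W : Finset V), W.card ≤ n →
    ∃ (dep : V → ℕ) (anc : V → V → Prop),
      (∀ b a, anc b a → dep b ≤ dep a ∧ InjPathOn A Set.univ b a (dep a - dep b)) ∧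
      (∀ (ℓ : ℕ) (u : ZMod ℓ → V), 2 ≤ ℓ → Function.Injective u → (∀ i, u i ∈ W) →
        (∀ i, A (u i) (u (i + 1))) →
        ∃ p, anc (u (p + 1)) (u p) ∧ dep (u (p + 1)) < dep (u p)) := by
  intro n
  classical
  induction n with
  | zero =>
      intro W hcard
      have hW : W = ∅ := Finset.card_eq_zero.mp (by omega)
      refine ⟨fun _ => 0, fun _ _ => False, by simp, ?_⟩
      intro ℓ u hℓ hinj hmem harc
      haveI : NeZero ℓ := ⟨by omega⟩
      exact absurd (hmem 0) (by simp [hW])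
  | succ n ih =>
      intro W hcard
      rcases W.eq_empty_or_nonempty with rfl | ⟨x, hx⟩
      · refine ⟨fun _ => 0, fun _ _ => False, by simp, ?_⟩
        intro ℓ u hℓ hinj hmem harc
        haveI : NeZero ℓ := ⟨by omega⟩
        exact absurd (hmem 0) (by simp)
      · obtain ⟨Vis, dep, anc, hxV, hsub, hcl, hdep0, hP, hroot, hcycT⟩ :=
          dfs_tree (A := A) (n + 1) W x hcard hx
        have hVne : Vis.Nonempty := ⟨x, hxV⟩
        have hlt : (W \ Vis).card ≤ n := by
          have hss : W \ Vis ⊂ W := by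
            refine ⟨Finset.sdiff_subset, fun hsub' => ?_⟩
            have := Finset.mem_sdiff.mp (hsub' hx)
            exact this.2 hxV
          have := Finset.card_lt_card hss
          omega
        obtain ⟨dep', anc', hP', hcyc'⟩ := ih (W \ Vis) hlt
        refine ⟨fun v => if v ∈ Vis then dep v else dep' v,
          fun b a => (anc b a ∧ b ∈ Vis ∧ a ∈ Vis) ∨ (anc' b a ∧ b ∉ Vis ∧ a ∉ Vis),
          ?_, ?_⟩
        · rintro b a (⟨h, hb, ha⟩ | ⟨h, hb, ha⟩)
          · obtain ⟨_, _, hle, hpath⟩ := hP b a h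
            simp only [if_pos hb, if_pos ha]
            exact ⟨hle, hpath.mono (by intro z _; trivial)⟩
          · obtain ⟨hle, hpath⟩ := hP' b a h
            simp only [if_neg hb, if_neg ha]
            exact ⟨hle, hpath⟩
        · intro ℓ u hℓ hinj hmem harc
          haveI : NeZero ℓ := ⟨by omega⟩
          by_cases hall : ∀ i, u i ∈ Vis
          · obtain ⟨p, hp, hplt⟩ := hcycT ℓ u hℓ hinj hall harc
            refine ⟨p, Or.inl ⟨hp, hall _, hall _⟩, ?_⟩
            simp only [if_pos (hall _)]; omega
          · push_neg at hall
            obtain ⟨j, hj⟩ := hall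
            have hnone : ∀ i, u i ∉ Vis := by
              intro i hi
              obtain ⟨p, hpin, hpout⟩ := cycle_exit u (↑Vis) (Finset.mem_coe.mpr hi)
                (fun h => hj (Finset.mem_coe.mp h))
              exact hpout (Finset.mem_coe.mpr
                (hcl (u p) (Finset.mem_coe.mp hpin) (u (p + 1)) (hmem (p + 1)) (harc p)))
            have hmem' : ∀ i, u i ∈ W \ Vis :=
              fun i => Finset.mem_sdiff.mpr ⟨hmem i, hnone i⟩
            obtain ⟨p, hp, hplt⟩ := hcyc' ℓ u hℓ hinj hmem' harc
            refine ⟨p, Or.inr ⟨hp, hnone _, hnone _⟩, ?_⟩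
            simp only [if_neg (hnone _)]; omega

end Forest

section Greedy

/-- Greedy coloring of `ZMod k` avoiding a set of at most `s` nonzero differences,
with `2s+1` colors. -/
lemma greedy_coloring (k s : ℕ) (hk : 2 ≤ k) (r : Fin s → ℕ) :
    ∃ f : ZMod k → Fin (2 * s + 1), ∀ x y : ZMod k, x ≠ y →
      (∃ i, x = y + ((r i : ZMod k) - 1)) → f x ≠ f y := by
  haveI : NeZero k := ⟨by omega⟩
  classical
  set d : Fin s → ZMod k := fun i => (r i : ZMod k) - 1 with hd
  -- conflict on naturals
  set con : ℕ → ℕ → Prop := fun a b =>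
    ∃ i, ((a : ZMod k) = (b : ZMod k) + d i ∨ (b : ZMod k) = (a : ZMod k) + d i) with hcon
  have claim : ∀ N, N ≤ k → ∃ g : ℕ → Fin (2 * s + 1),
      ∀ b < N, ∀ a < b, con a b → g a ≠ g b := by
    intro N
    induction N with
    | zero => exact fun _ => ⟨fun _ => ⟨0, by omega⟩, fun b hb => by omega⟩
    | succ N ihN =>
        intro hNk
        obtain ⟨g, hg⟩ := ihN (by omega)
        -- colors of earlier conflicting vertices
        set C : Finset (Fin (2 * s + 1)) :=
          ((Finset.range N).filter (fun a => con a N)).image g with hC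
        have hTcard : C.card ≤ 2 * s := by
          set T : Finset (ZMod k) :=
            (Finset.univ.image (fun i : Fin s => (N : ZMod k) - d i)) ∪
            (Finset.univ.image (fun i : Fin s => (N : ZMod k) + d i)) with hT
          have hTc : T.card ≤ 2 * s := by
            refine (Finset.card_union_le _ _).trans ?_
            have := Finset.card_image_le (s := (Finset.univ : Finset (Fin s)))
              (f := fun i : Fin s => (N : ZMod k) - d i)
            have := Finset.card_image_le (s := (Finset.univ : Finset (Fin s)))
              (f := fun i : Fin s => (N : ZMod k) + d i)
            simp only [Finset.card_univ, Fintype.card_fin] at *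
            omega
          have hmap : ∀ a ∈ (Finset.range N).filter (fun a => con a N),
              (a : ZMod k) ∈ T := by
            intro a ha
            obtain ⟨-, i, h | h⟩ := Finset.mem_filter.mp ha
            · refine Finset.mem_union_right _ (Finset.mem_image.mpr ⟨i, Finset.mem_univ _, ?_⟩)
              · rw [← h]
            · refine Finset.mem_union_left _ (Finset.mem_image.mpr ⟨i, Finset.mem_univ _, ?_⟩)
              · rw [h]; ring
          have hinj : ∀ a ∈ (Finset.range N).filter (fun a => con a N),
              ∀ b ∈ (Finset.range N).filter (fun a => con a N),
              (a : ZMod k) = (b : ZMod k) → a = b := by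
            intro a ha b hb hab
            have ha' := (Finset.mem_filter.mp ha).1
            have hb' := (Finset.mem_filter.mp hb).1
            rw [Finset.mem_range] at ha' hb'
            have := congrArg ZMod.val hab
            rwa [ZMod.val_natCast, ZMod.val_natCast,
              Nat.mod_eq_of_lt (by omega), Nat.mod_eq_of_lt (by omega)] at this
          have hfil := Finset.card_le_card_of_injOn _ hmap hinj
          calc C.card ≤ _ := Finset.card_image_le
            _ ≤ T.card := hfil
            _ ≤ 2 * s := hTc
        have hCne : ∃ c₀ : Fin (2 * s + 1), c₀ ∉ C := by
          by_contra h
          push_neg at h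
          have : (Finset.univ : Finset (Fin (2 * s + 1))) ⊆ C := fun c _ => h c
          have := Finset.card_le_card this
          simp only [Finset.card_univ, Fintype.card_fin] at this
          omega
        obtain ⟨c₀, hc₀⟩ := hCne
        refine ⟨fun m => if m = N then c₀ else g m, ?_⟩
        intro b hb a hab hconab
        by_cases hbN : b = N
        · have haN : a ≠ N := by omega
          simp only [if_neg haN, if_pos hbN]
          intro h
          apply hc₀
          rw [← h]
          exact Finset.mem_image.mpr ⟨a, Finset.mem_filter.mpr
            ⟨Finset.mem_range.mpr (by omega), hbN ▸ hconab⟩, rfl⟩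
        · have haN : a ≠ N := by omega
          simp only [if_neg haN, if_neg hbN]
          exact hg b (by omega) a hab hconab
  obtain ⟨g, hg⟩ := claim k le_rfl
  refine ⟨fun x => g x.val, ?_⟩
  intro x y hxy ⟨i, hi⟩
  have hvx : x.val < k := ZMod.val_lt x
  have hvy : y.val < k := ZMod.val_lt y
  have hvne : x.val ≠ y.val := fun h => hxy (ZMod.val_injective _ h)
  have hcx : ((x.val : ℕ) : ZMod k) = x := ZMod.natCast_rightInverse x
  have hcy : ((y.val : ℕ) : ZMod k) = y := ZMod.natCast_rightInverse y
  rcases Nat.lt_or_ge x.val y.val with h | h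
  · have hcon' : con x.val y.val := ⟨i, Or.inl (by rw [hcx, hcy]; exact hi)⟩
    exact hg y.val hvy x.val h hcon'
  · have h' : y.val < x.val := by omega
    have hcon' : con y.val x.val := ⟨i, Or.inr (by rw [hcx, hcy]; exact hi)⟩
    exact fun hEq => (hg x.val hvx y.val h' hcon') hEq.symm

end Greedy


/-- If `k ≥ 2`, `s ≥ 1`, `r₁,…,r_s` are integers with `k ≥ rᵢ ≥ 0`, `rᵢ ≠ 1`, and every
directed cycle of the strongly connected digraph `D` has length congruent to some `rᵢ`
modulo `k`, then `χ_A(D) ≤ 2s + 1`. -/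
theorem stmt_0 {V : Type*} [Fintype V] (A : V → V → Prop) (hloopless : Irreflexive A)
    (k s : ℕ) (hk : 2 ≤ k) (hs : 1 ≤ s)
    (r : Fin s → ℕ) (hrk : ∀ i, r i ≤ k) (hr1 : ∀ i, r i ≠ 1)
    (hsc : StronglyConnected A)
    (hcyc : ∀ ℓ, HasCycleLen A ℓ → ∃ i, ℓ ≡ r i [MOD k]) :
    dichromatic A ≤ 2 * s + 1 := by
  classical
  haveI : NeZero k := ⟨by omega⟩
  -- the residues r i are never ≡ 1 (mod k)
  have hrmod : ∀ i, ((r i : ZMod k) : ZMod k) ≠ 1 := by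
    intro i h
    have : (r i : ZMod k) = ((1 : ℕ) : ZMod k) := by simpa using h
    have hmod := (ZMod.natCast_eq_natCast_iff _ _ _).mp this
    have h1 : 1 % k = 1 := Nat.mod_eq_of_lt (by omega)
    unfold Nat.ModEq at hmod
    rw [h1] at hmod
    rcases Nat.lt_or_ge (r i) k with hlt | hge
    · rw [Nat.mod_eq_of_lt hlt] at hmod
      exact hr1 i hmod
    · have : r i = k := le_antisymm (hrk i) hge
      rw [this, Nat.mod_self] at hmod
      omega
  obtain ⟨f, hf⟩ := greedy_coloring k s hk r
  obtain ⟨dep, anc, hP, hback⟩ :=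
    dfs_forest (A := A) (Finset.univ : Finset V).card Finset.univ le_rfl
  refine Nat.sInf_le ?_
  refine ⟨fun v => f ((dep v : ZMod k)), ?_⟩
  intro i ℓ hCyc
  obtain ⟨hℓ, u, hinj, hmem, harc⟩ := hCyc
  obtain ⟨p, hanc, hlt⟩ := hback ℓ u hℓ hinj (fun _ => Finset.mem_univ _) harc
  obtain ⟨hle, hpath⟩ := hP _ _ hanc
  set b := u (p + 1) with hbdef
  set a := u p with hadef
  set t : ℕ := dep a - dep b with htdef
  have ht1 : 1 ≤ t := by omega
  have hcycle : HasCycleLen A (t + 1) := hpath.toCycle ht1 (harc p)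
  obtain ⟨i₀, hmod⟩ := hcyc (t + 1) hcycle
  have hcast : ((t + 1 : ℕ) : ZMod k) = (r i₀ : ZMod k) :=
    (ZMod.natCast_eq_natCast_iff _ _ _).mpr hmod
  have htz : (t : ZMod k) = (r i₀ : ZMod k) - 1 := by
    push_cast at hcast ⊢
    linear_combination hcast
  have hdepeq : dep a = dep b + t := by omega
  have hXY : (dep a : ZMod k) = (dep b : ZMod k) + ((r i₀ : ZMod k) - 1) := by
    rw [hdepeq]
    push_cast
    rw [← htz]
  have hne : (dep a : ZMod k) ≠ (dep b : ZMod k) := by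
    intro h
    rw [h] at hXY
    have : (r i₀ : ZMod k) = 1 := by linear_combination -hXY
    exact hrmod i₀ this
  have hceq : f ((dep a : ZMod k)) = f ((dep b : ZMod k)) := by
    have h1 : f ((dep a : ZMod k)) = i := hmem p
    have h2 : f ((dep b : ZMod k)) = i := hmem (p + 1)
    rw [h1, h2]
  exact hf _ _ hne ⟨i₀, hXY⟩ hceq
end

section
/- Let D be a strongly connected digraph with girth g, and let k and p be integers with k ≥ g − 1 ≥ p ≥ 1. Set k̂ = ⌈k/p⌉·p. If for every integer r with −p + 2 ≤ r ≤ p the digraph D has no directed cycle whose length is congruent to r modulo k̂, then χ_A(D) ≤ ⌈k/p⌉. -/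
/-!
Grow a depth-first search tree from any vertex; by strong connectivity it spans `V`. Every
directed cycle has a back arc `a → b` into a tree ancestor `b` of `a`, and the tree path from
`b` to `a` closes with it a cycle of length `m + 1`, where `m = depth a - depth b`. Colour each
vertex by the block of `p` consecutive residues containing its depth modulo `k̂ = ⌈k/p⌉ p`. On
a monochromatic cycle, `depth a` and `depth b` lie in the same block, so `m + 1` is congruent
modulo `k̂` to some `r` with `2 - p ≤ r ≤ p`, which the hypothesis excludes.
-/

section DirectedCycles

open Relation Function

variable {V : Type*}

def IsCycleIn (A : V → V → Prop) (U : Set V) {ℓ : ℕ} (u : ZMod ℓ → V) : Prop :=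
  Injective u ∧ (∀ i, u i ∈ U) ∧ ∀ i, A (u i) (u (i + 1))

lemma ZMod.forall_of_imp_add_one {ℓ : ℕ} [NeZero ℓ] {P : ZMod ℓ → Prop} {i₀ : ZMod ℓ}
    (h₀ : P i₀) (hsucc : ∀ i, P i → P (i + 1)) (i : ZMod ℓ) : P i := by
  have hfrom : ∀ n : ℕ, P (i₀ + n) := by
    intro n
    induction n with
    | zero => simpa using h₀
    | succ n ih => simpa [add_assoc] using hsucc _ ih
  simpa using hfrom (i - i₀).val

lemma Set.ncard_compl_lt {X Y : Set V} [Finite V] {a : V} (hXY : X ⊆ Y) (haX : a ∉ X)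
    (haY : a ∈ Y) : Yᶜ.ncard < Xᶜ.ncard :=
  Set.ncard_lt_ncard (Set.ssubset_iff_of_subset (Set.compl_subset_compl.mpr hXY) |>.mpr
    ⟨a, haX, fun h => h haY⟩)

lemma hasCycleLen_of_chain {A : V → V → Prop} (f : ℕ → V) {m : ℕ} (hm : 1 ≤ m)
    (hinj : Set.InjOn f (Set.Iic m))
    (harc : ∀ j < m, A (f j) (f (j + 1))) (hclose : A (f m) (f 0)) :
    HasCycleLen A (m + 1) := by
  have : NeZero (m + 1) := ⟨by omega⟩
  refine ⟨by omega, fun i => f i.val, fun a b hab => ?_, fun _ => Set.mem_univ _, fun i => ?_⟩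
  · exact ZMod.val_injective _ (hinj (Set.mem_Iic.mpr (by have := ZMod.val_lt a; omega))
      (Set.mem_Iic.mpr (by have := ZMod.val_lt b; omega)) hab)
  · have hi : i.val < m + 1 := ZMod.val_lt i
    have hsucc : (i + 1).val = (i.val + 1) % (m + 1) := by
      have : Fact (1 < m + 1) := ⟨by omega⟩
      rw [ZMod.val_add, ZMod.val_one]
    show A (f i.val) (f (i + 1).val)
    rcases Nat.lt_or_ge i.val m with h | h
    · rw [hsucc, Nat.mod_eq_of_lt (by omega)]
      exact harc _ h
    · rw [hsucc, show i.val = m by omega, Nat.mod_self]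
      exact hclose

section Reach

variable {A : V → V → Prop} {X : Set V} {r : V}

def reachAvoid (A : V → V → Prop) (X : Set V) (r : V) : Set V :=
  {v | ReflTransGen (fun a b => A a b ∧ b ∉ X) r v}

lemma mem_reachAvoid_self : r ∈ reachAvoid A X r := ReflTransGen.refl

lemma mem_reachAvoid_of_arc {a b : V} (ha : a ∈ reachAvoid A X r) (hab : A a b) (hb : b ∉ X) :
    b ∈ reachAvoid A X r :=
  ReflTransGen.tail ha ⟨hab, hb⟩

lemma disjoint_reachAvoid (hr : r ∉ X) : Disjoint X (reachAvoid A X r) := by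
  refine Set.disjoint_right.mpr fun v hv => ?_
  induction hv with
  | refl => exact hr
  | tail _ step _ => exact step.2

lemma reachAvoid_anti {X' : Set V} (h : X' ⊆ X) : reachAvoid A X r ⊆ reachAvoid A X' r :=
  fun _ hv => ReflTransGen.mono (fun _ _ hab => ⟨hab.1, fun hb => hab.2 (h hb)⟩) _ _ hv

lemma reachAvoid_empty (hsc : StronglyConnected A) : reachAvoid A ∅ r = Set.univ :=
  Set.eq_univ_of_forall fun v => ReflTransGen.mono (fun _ _ hab => ⟨hab, id⟩) _ _ (hsc r v)

lemma reachAvoid_eq_singleton (hr : ∀ c, A r c → c ∉ X → c = r) : reachAvoid A X r = {r} := by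
  refine Set.eq_singleton_iff_unique_mem.mpr ⟨mem_reachAvoid_self, fun v hv => ?_⟩
  induction hv with
  | refl => rfl
  | tail _ step ih => exact hr _ (ih ▸ step.1) step.2

/-- The depth-first split at `r`: first everything reachable from the out-neighbour `c`
without revisiting `r`, then what remains reachable from `r`. -/
lemma reachAvoid_eq_union {c : V} (hrc : A r c) (hc : c ∉ X) :
    reachAvoid A X r =
      reachAvoid A (X ∪ {r}) c ∪ reachAvoid A (X ∪ reachAvoid A (X ∪ {r}) c) r := by
  set N₁ := reachAvoid A (X ∪ {r}) c
  apply Set.Subset.antisymm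
  · intro v hv
    induction hv with
    | refl => exact Or.inr mem_reachAvoid_self
    | @tail a b _ hab ih =>
      by_cases hbr : b = r
      · exact Or.inr (hbr ▸ mem_reachAvoid_self)
      rcases ih with ha | ha
      · exact Or.inl (mem_reachAvoid_of_arc ha hab.1 (by simp [hab.2, hbr]))
      by_cases hb : b ∈ N₁
      · exact Or.inl hb
      · exact Or.inr (mem_reachAvoid_of_arc ha hab.1 (by simp [hab.2, hb]))
  · rintro v (hv | hv)
    · exact ReflTransGen.head ⟨hrc, hc⟩ (reachAvoid_anti Set.subset_union_left hv)
    · exact reachAvoid_anti Set.subset_union_left hv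

end Reach

structure DFSTree (A : V → V → Prop) (N : Set V) (r : V) where
  tree : V → V → Prop
  depth : V → ℕ
  root_mem : r ∈ N
  tree_spec : ∀ x y, tree x y → A x y ∧ x ∈ N ∧ y ∈ N ∧ depth y = depth x + 1
  reach_of_mem : ∀ v ∈ N, ReflTransGen tree r v
  exists_back_arc : ∀ {ℓ : ℕ} (u : ZMod ℓ → V), 2 ≤ ℓ → IsCycleIn A N u →
    ∃ i, ReflTransGen tree (u (i + 1)) (u i)

namespace DFSTree

variable {A : V → V → Prop}

def singleton (A : V → V → Prop) (r : V) (d : ℕ) : DFSTree A {r} r where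
  tree _ _ := False
  depth _ := d
  root_mem := rfl
  tree_spec _ _ h := h.elim
  reach_of_mem _ hv := hv ▸ ReflTransGen.refl
  exists_back_arc u hℓ hu := by
    have : Fact (1 < _) := ⟨hℓ⟩
    exact absurd (hu.1 ((hu.2.1 0).trans (hu.2.1 1).symm)) zero_ne_one

lemma exists_glue {N₁ N₂ : Set V} {r c : V} (t₁ : DFSTree A N₁ c) (t₂ : DFSTree A N₂ r)
    (hrc : A r c) (hr : r ∉ N₁) (hdisj : Disjoint N₁ N₂)
    (hN₁N₂ : ∀ a ∈ N₁, ∀ b ∈ N₂, A a b → b = r) (hdepth : t₁.depth c = t₂.depth r + 1) :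
    ∃ t : DFSTree A (N₁ ∪ N₂) r, t.depth r = t₂.depth r := by
  classical
  let T : V → V → Prop := fun x y => t₁.tree x y ∨ t₂.tree x y ∨ x = r ∧ y = c
  have hc : c ∈ N₁ := t₁.root_mem
  have reach₁ : ∀ {a b}, ReflTransGen t₁.tree a b → ReflTransGen T a b :=
    fun h => ReflTransGen.mono (fun _ _ h => Or.inl h) _ _ h
  have reach₂ : ∀ {a b}, ReflTransGen t₂.tree a b → ReflTransGen T a b :=
    fun h => ReflTransGen.mono (fun _ _ h => Or.inr (Or.inl h)) _ _ h
  have reach_of_mem : ∀ v ∈ N₁ ∪ N₂, ReflTransGen T r v := by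
    rintro v (hv | hv)
    · exact ReflTransGen.head (Or.inr (Or.inr ⟨rfl, rfl⟩)) (reach₁ (t₁.reach_of_mem v hv))
    · exact reach₂ (t₂.reach_of_mem v hv)
  refine ⟨{ tree := T
            depth v := if v ∈ N₁ then t₁.depth v else t₂.depth v
            root_mem := Or.inr t₂.root_mem
            tree_spec := ?_
            reach_of_mem := reach_of_mem
            exists_back_arc := ?_ }, if_neg hr⟩
  · rintro x y (h | h | ⟨rfl, rfl⟩)
    · obtain ⟨hxy, hx, hy, hd⟩ := t₁.tree_spec x y h
      exact ⟨hxy, Or.inl hx, Or.inl hy, by simp [hx, hy, hd]⟩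
    · obtain ⟨hxy, hx, hy, hd⟩ := t₂.tree_spec x y h
      have hx₁ : x ∉ N₁ := hdisj.notMem_of_mem_right hx
      have hy₁ : y ∉ N₁ := hdisj.notMem_of_mem_right hy
      exact ⟨hxy, Or.inr hx, Or.inr hy, by simp [hx₁, hy₁, hd]⟩
    · exact ⟨hrc, Or.inr t₂.root_mem, Or.inl hc, by simp [hr, hc, hdepth]⟩
  · intro ℓ u hℓ hu
    have : NeZero ℓ := ⟨by omega⟩
    by_cases hur : ∃ i, u i = r
    · obtain ⟨i, hi⟩ := hur
      exact ⟨i - 1, by rw [sub_add_cancel, hi]; exact reach_of_mem _ (hu.2.1 _)⟩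
    push Not at hur
    by_cases hu₁ : ∃ i, u i ∈ N₁
    · -- once in `N₁`, the cycle can only leave it through `r`, which it avoids
      obtain ⟨i₀, hi₀⟩ := hu₁
      have hall : ∀ i, u i ∈ N₁ := ZMod.forall_of_imp_add_one hi₀ fun i hi =>
        (hu.2.1 (i + 1)).resolve_right fun h₂ => hur _ (hN₁N₂ _ hi _ h₂ (hu.2.2 i))
      obtain ⟨i, hi⟩ := t₁.exists_back_arc u hℓ ⟨hu.1, hall, hu.2.2⟩
      exact ⟨i, reach₁ hi⟩
    · push Not at hu₁
      obtain ⟨i, hi⟩ := t₂.exists_back_arc u hℓ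
        ⟨hu.1, fun i => (hu.2.1 i).resolve_left (hu₁ i), hu.2.2⟩
      exact ⟨i, reach₂ hi⟩

lemma exists_reachAvoid [Finite V] (X : Set V) (r : V) (hr : r ∉ X) (d : ℕ) :
    ∃ t : DFSTree A (reachAvoid A X r) r, t.depth r = d := by
  induction hn : Xᶜ.ncard using Nat.strong_induction_on generalizing X r d with
  | _ n ih =>
  by_cases hleaf : ∀ c, A r c → c ∉ X → c = r
  · rw [reachAvoid_eq_singleton hleaf]
    exact ⟨singleton A r d, rfl⟩
  push Not at hleaf
  obtain ⟨c, hrc, hcX, hcr⟩ := hleaf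
  set N₁ := reachAvoid A (X ∪ {r}) c
  have hcXr : c ∉ X ∪ {r} := by simp [hcX, hcr]
  have hrN₁ : r ∉ N₁ := fun h => Set.disjoint_left.mp (disjoint_reachAvoid hcXr) (by simp) h
  obtain ⟨t₁, ht₁⟩ := ih _ (hn ▸ Set.ncard_compl_lt Set.subset_union_left hr (by simp)) _ _
    hcXr (d + 1) rfl
  have hrXN₁ : r ∉ X ∪ N₁ := by simp [hr, hrN₁]
  obtain ⟨t₂, ht₂⟩ := ih _ (hn ▸ Set.ncard_compl_lt Set.subset_union_left hcX
    (Or.inr mem_reachAvoid_self)) _ _ hrXN₁ d rfl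
  have hdisj := disjoint_reachAvoid (A := A) hrXN₁
  rw [reachAvoid_eq_union hrc hcX, ← ht₂]
  refine exists_glue t₁ t₂ hrc hrN₁ (hdisj.mono_left Set.subset_union_right) ?_ (by omega)
  intro a ha b hb hab
  by_contra hbr
  have hbX : b ∉ X := fun h => hdisj.notMem_of_mem_right hb (Or.inl h)
  exact hdisj.notMem_of_mem_right hb (Or.inr (mem_reachAvoid_of_arc ha hab (by simp [hbX, hbr])))

end DFSTree

section Depth

variable {A R : V → V → Prop} {depth : V → ℕ}

lemma exists_chain_of_reflTransGen (hR : ∀ x y, R x y → depth y = depth x + 1) {a b : V}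
    (h : ReflTransGen R a b) :
    ∃ (m : ℕ) (f : ℕ → V), f 0 = a ∧ f m = b ∧ (∀ j < m, R (f j) (f (j + 1))) ∧
      ∀ j ≤ m, depth (f j) = depth a + j := by
  induction h with
  | refl => exact ⟨0, fun _ => a, rfl, rfl, by omega, fun j hj => by simp [show j = 0 by omega]⟩
  | @tail b c _ hbc ih =>
    obtain ⟨m, f, hf0, hfm, hstep, hdepth⟩ := ih
    refine ⟨m + 1, fun j => if j ≤ m then f j else c, by simp [hf0], by simp, ?_, ?_⟩
    · intro j hj
      rcases Nat.lt_or_ge j m with hjm | hjm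
      · simpa [hjm.le, Nat.succ_le_of_lt hjm] using hstep j hjm
      · obtain rfl : j = m := by omega
        simpa [hfm] using hbc
    · intro j hj
      rcases Nat.lt_or_ge m j with hjm | hjm
      · simp only [show ¬ j ≤ m by omega, if_false]
        rw [hR _ _ hbc, ← hfm, hdepth m le_rfl]
        omega
      · simp [hjm, hdepth j hjm]

lemma exists_hasCycleLen_of_reflTransGen (hR : ∀ x y, R x y → A x y ∧ depth y = depth x + 1)
    {a b : V} (hba : ReflTransGen R b a) (hab : A a b) (hne : a ≠ b) :
    ∃ m, depth a = depth b + m ∧ HasCycleLen A (m + 1) := by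
  obtain ⟨m, f, hf0, hfm, hstep, hdepth⟩ :=
    exists_chain_of_reflTransGen (fun x y h => (hR x y h).2) hba
  have hm : 1 ≤ m := Nat.one_le_iff_ne_zero.mpr fun h => hne (by rw [← hfm, ← hf0, h])
  refine ⟨m, hfm ▸ hdepth m le_rfl, hasCycleLen_of_chain f hm (fun j hj j' hj' h => ?_)
    (fun j hj => (hR _ _ (hstep j hj)).1) (by rwa [hfm, hf0])⟩
  have := congrArg depth h
  rw [hdepth j hj, hdepth j' hj'] at this
  omega

lemma DFSTree.exists_depth_jump {N : Set V} {r : V} (t : DFSTree A N r) {ℓ : ℕ}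
    {u : ZMod ℓ → V} (hℓ : 2 ≤ ℓ) (hu : IsCycleIn A N u) :
    ∃ i m, t.depth (u i) = t.depth (u (i + 1)) + m ∧ HasCycleLen A (m + 1) := by
  obtain ⟨i, hi⟩ := t.exists_back_arc u hℓ hu
  have : Fact (1 < ℓ) := ⟨hℓ⟩
  have hne : u i ≠ u (i + 1) := fun h =>
    (one_ne_zero : (1 : ZMod ℓ) ≠ 0) (by simpa using (hu.1 h).symm)
  exact ⟨i, exists_hasCycleLen_of_reflTransGen
    (fun x y h => ⟨(t.tree_spec x y h).1, (t.tree_spec x y h).2.2.2⟩) hi (hu.2.2 i) hne⟩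

lemma StronglyConnected.exists_dfsTree [Finite V] (hsc : StronglyConnected A) (r : V) :
    Nonempty (DFSTree A Set.univ r) := by
  obtain ⟨t, -⟩ := DFSTree.exists_reachAvoid (A := A) ∅ r (Set.notMem_empty r) 0
  exact ⟨reachAvoid_empty hsc ▸ t⟩

end Depth

lemma Int.modEq_sub_of_mod_div_eq {n p x y : ℕ} (hpn : p ∣ n) (h : x % n / p = y % n / p) :
    (x : ℤ) - y ≡ (x % p : ℕ) - (y % p : ℕ) [ZMOD n] := by
  refine Int.modEq_iff_dvd.mpr ⟨(y / n : ℕ) - (x / n : ℕ), ?_⟩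
  have hx : n * (x / n) + p * (x % n / p) + x % p = x := by
    rw [← Nat.mod_mod_of_dvd x hpn, add_assoc, Nat.div_add_mod, Nat.div_add_mod]
  have hy : n * (y / n) + p * (y % n / p) + y % p = y := by
    rw [← Nat.mod_mod_of_dvd y hpn, add_assoc, Nat.div_add_mod, Nat.div_add_mod]
  have hx' : (n : ℤ) * (x / n : ℕ) + p * (x % n / p : ℕ) + (x % p : ℕ) = x := by exact_mod_cast hx
  have hy' : (n : ℤ) * (y / n : ℕ) + p * (y % n / p : ℕ) + (y % p : ℕ) = y := by exact_mod_cast hy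
  have h' : ((x % n / p : ℕ) : ℤ) = (y % n / p : ℕ) := by exact_mod_cast h
  linear_combination hx' - hy' - (p : ℤ) * h'

lemma dichromatic_le_of_depth {A : V → V → Prop} (depth : V → ℕ) {q p : ℕ} (hq : 0 < q)
    (hp : 0 < p)
    (hjump : ∀ {ℓ : ℕ} (u : ZMod ℓ → V), 2 ≤ ℓ → IsCycleIn A Set.univ u →
      ∃ i m, depth (u i) = depth (u (i + 1)) + m ∧ HasCycleLen A (m + 1))
    (hnc : ∀ r : ℤ, -(p : ℤ) + 2 ≤ r → r ≤ (p : ℤ) →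
      ∀ ℓ, HasCycleLen A ℓ → ¬ ((ℓ : ℤ) ≡ r [ZMOD ((q * p : ℕ) : ℤ)])) :
    dichromatic A ≤ q := by
  have hcol : ∀ v, depth v % (q * p) / p < q := fun v =>
    (Nat.div_lt_iff_lt_mul hp).mpr (Nat.mod_lt _ (Nat.mul_pos hq hp))
  refine Nat.sInf_le ⟨fun v => ⟨depth v % (q * p) / p, hcol v⟩, fun c ℓ ⟨hℓ, u, hu⟩ => ?_⟩
  obtain ⟨i, m, hdepth, hcyc⟩ := hjump u hℓ ⟨hu.1, fun _ => trivial, hu.2.2⟩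
  have hsame : depth (u i) % (q * p) / p = depth (u (i + 1)) % (q * p) / p :=
    congrArg Fin.val ((hu.2.1 i).trans (hu.2.1 (i + 1)).symm)
  have hmod := Int.modEq_sub_of_mod_div_eq (dvd_mul_left p q) hsame
  have hxp := Nat.mod_lt (depth (u i)) hp
  have hyp := Nat.mod_lt (depth (u (i + 1))) hp
  have hlen : ((m + 1 : ℕ) : ℤ) = (depth (u i) : ℤ) - depth (u (i + 1)) + 1 := by
    rw [hdepth]
    push_cast
    ring
  exact hnc _ (by omega) (by omega) _ hcyc (hlen ▸ hmod.add_right 1)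

end DirectedCycles

theorem stmt_1_general {V : Type*} [Fintype V] (A : V → V → Prop)
    (hsc : StronglyConnected A)
    (g : ℕ) (hg : HasCycleLen A g)
    (k p : ℕ) (hp1 : 1 ≤ p) (hpg : p ≤ g - 1) (hgk : g - 1 ≤ k)
    (khat : ℕ) (hkhat : khat = ⌈(k : ℚ) / (p : ℚ)⌉₊ * p)
    (hnc : ∀ r : ℤ, -(p : ℤ) + 2 ≤ r → r ≤ (p : ℤ) →
      ∀ ℓ, HasCycleLen A ℓ → ¬ ((ℓ : ℤ) ≡ r [ZMOD (khat : ℤ)])) :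
    dichromatic A ≤ ⌈(k : ℚ) / (p : ℚ)⌉₊ := by
  obtain ⟨-, u, -⟩ := hg
  obtain ⟨t⟩ := hsc.exists_dfsTree (u 0)
  have hq : 0 < ⌈(k : ℚ) / (p : ℚ)⌉₊ :=
    Nat.ceil_pos.mpr (div_pos (by exact_mod_cast (show 0 < k by omega)) (by exact_mod_cast hp1))
  exact dichromatic_le_of_depth t.depth hq hp1 (fun u hℓ hu => t.exists_depth_jump hℓ hu)
    (hkhat ▸ hnc)

/-- If `D` is strongly connected with girth `g`, `k ≥ g − 1 ≥ p ≥ 1`, `k̂ = ⌈k/p⌉·p`, and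
`D` has no directed cycle of length congruent to `r` modulo `k̂` for any integer
`−p + 2 ≤ r ≤ p`, then `χ_A(D) ≤ ⌈k/p⌉`. -/
theorem stmt_1 {V : Type*} [Fintype V] (A : V → V → Prop) (hloopless : Irreflexive A)
    (hsc : StronglyConnected A)
    (g : ℕ) (hg : HasCycleLen A g) (hgmin : ∀ ℓ, HasCycleLen A ℓ → g ≤ ℓ)
    (k p : ℕ) (hp1 : 1 ≤ p) (hpg : p ≤ g - 1) (hgk : g - 1 ≤ k)
    (khat : ℕ) (hkhat : khat = ⌈(k : ℚ) / (p : ℚ)⌉₊ * p)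
    (hnc : ∀ r : ℤ, -(p : ℤ) + 2 ≤ r → r ≤ (p : ℤ) →
      ∀ ℓ, HasCycleLen A ℓ → ¬ ((ℓ : ℤ) ≡ r [ZMOD (khat : ℤ)])) :
    dichromatic A ≤ ⌈(k : ℚ) / (p : ℚ)⌉₊ :=
  stmt_1_general A hsc g hg k p hp1 hpg hgk khat hkhat hnc
end

section
/- Let D be a digraph with at least one directed cycle, and let g and c be its girth and circumference, respectively. Then χ_A(D) ≤ ⌈(c − 1)/(g − 1)⌉ + 1. -/
/-!
Let `dep v` be the depth of `v` in a depth-first search forest of `D`. Every directed cycle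
contains a back arc `x → y`, with `y` an ancestor of `x`; the tree path from `y` to `x` closed
by this arc is a cycle of length `dep x - dep y + 1`, so `g - 1 ≤ dep x - dep y ≤ c - 1`.
Cutting the depths into blocks of `g - 1` consecutive values, `x` and `y` lie in different
blocks at most `K = ⌈(c - 1)/(g - 1)⌉` apart, hence colouring `v` by its block index modulo
`K + 1` makes every colour class acyclic. Only this back-arc property of the forest is needed.
-/

open Relation

section

variable {V : Type*} {A : V → V → Prop}

theorem CycleOn.nontrivial {U : Set V} {ℓ : ℕ} (h : CycleOn A U ℓ) : U.Nontrivial := by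
  obtain ⟨hℓ, u, hinj, hmem, -⟩ := h
  have : Fact (1 < ℓ) := ⟨hℓ⟩
  exact ⟨u 0, hmem 0, u 1, hmem 1, hinj.ne zero_ne_one⟩

theorem ZMod.exists_apply_and_not_apply_add_one {ℓ : ℕ} [NeZero ℓ] {P : ZMod ℓ → Prop}
    {i j : ZMod ℓ} (hi : P i) (hj : ¬ P j) : ∃ k, P k ∧ ¬ P (k + 1) := by
  by_contra! hstep
  have hall : ∀ n : ℕ, P (i + n) := by
    intro n
    induction n with
    | zero => simpa using hi
    | succ n ih => simpa [add_assoc] using hstep _ ih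
  apply hj
  simpa using hall (j - i).val

def RisingArc (A : V → V → Prop) (dep : V → ℕ) (S : Set V) (x y : V) : Prop :=
  x ∈ S ∧ y ∈ S ∧ A x y ∧ dep y = dep x + 1

theorem reflTransGen_risingArc_mono {dep dep' : V → ℕ} {S S' : Set V} {k : ℕ} (hS : S ⊆ S')
    (hdep : ∀ v ∈ S, dep' v = dep v + k) {x y : V}
    (h : ReflTransGen (RisingArc A dep S) x y) : ReflTransGen (RisingArc A dep' S') x y :=
  ReflTransGen.mono (fun a b ⟨ha, hb, hab, hd⟩ =>
    ⟨hS ha, hS hb, hab, by rw [hdep a ha, hdep b hb, hd]; ring⟩) x y h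

theorem exists_seq_of_reflTransGen_risingArc {dep : V → ℕ} {S : Set V} {x y : V}
    (h : ReflTransGen (RisingArc A dep S) y x) :
    ∃ m, ∃ f : ℕ → V, f 0 = y ∧ f m = x ∧ (∀ i < m, A (f i) (f (i + 1))) ∧
      ∀ i ≤ m, dep (f i) = dep y + i := by
  induction h with
  | refl => exact ⟨0, fun _ => y, rfl, rfl, by omega, by intro i hi; simp [Nat.le_zero.1 hi]⟩
  | @tail b z _ hbz ih =>
    obtain ⟨m, f, hf0, hfm, harc, hdep⟩ := ih
    refine ⟨m + 1, fun i => if i ≤ m then f i else z, by simp [hf0], by simp, ?_, ?_⟩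
    · intro i hi
      rcases Nat.lt_succ_iff_lt_or_eq.1 hi with hi | rfl
      · simpa [hi.le, Nat.succ_le_of_lt hi] using harc i hi
      · simpa [hfm] using hbz.2.2.1
    · intro i hi
      rcases Nat.le_succ_iff.1 hi with hi | rfl
      · simpa [hi] using hdep i hi
      · simp [hbz.2.2.2, ← hfm, hdep m le_rfl, add_assoc]

theorem hasCycleLen_of_seq {m : ℕ} {f : ℕ → V} (hm : m ≠ 0) (hinj : Set.InjOn f (Set.Iic m))
    (harc : ∀ i < m, A (f i) (f (i + 1))) (hback : A (f m) (f 0)) : HasCycleLen A (m + 1) := by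
  refine ⟨by omega, fun j => f j.val, ?_, fun _ => trivial, fun j => ?_⟩
  · intro j₁ j₂ h
    exact ZMod.val_injective _ (hinj (Nat.lt_succ_iff.1 (ZMod.val_lt j₁))
      (Nat.lt_succ_iff.1 (ZMod.val_lt j₂)) h)
  · have : Fact (1 < m + 1) := ⟨by omega⟩
    have hval : (j + 1).val = (j.val + 1) % (m + 1) := by rw [ZMod.val_add, ZMod.val_one]
    show A (f j.val) (f (j + 1).val)
    rcases (Nat.lt_succ_iff.1 (ZMod.val_lt j)).lt_or_eq with hj | hj
    · rw [hval, Nat.mod_eq_of_lt (by omega)]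
      exact harc _ hj
    · rw [hval, hj, Nat.mod_self]
      exact hback

theorem exists_hasCycleLen_of_risingArc {dep : V → ℕ} {S : Set V} {x y : V}
    (h : ReflTransGen (RisingArc A dep S) y x) (hxy : A x y) (hne : x ≠ y) :
    ∃ m, dep x = dep y + m ∧ HasCycleLen A (m + 1) := by
  obtain ⟨m, f, hf0, hfm, harc, hdep⟩ := exists_seq_of_reflTransGen_risingArc h
  refine ⟨m, by rw [← hfm, hdep m le_rfl], hasCycleLen_of_seq ?_ ?_ harc (by rwa [hfm, hf0])⟩
  · rintro rfl
    exact hne (hfm.symm.trans hf0)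
  · intro i hi j hj hij
    have := congrArg dep hij
    rw [hdep i hi, hdep j hj] at this
    omega

/-- Every cycle in `S` contains both ends of a back arc `x → y` of the DFS forest whose tree arcs
are the rising arcs. -/
def HasBackArcs (A : V → V → Prop) (dep : V → ℕ) (S : Set V) : Prop :=
  ∀ U ⊆ S, ∀ ℓ, CycleOn A U ℓ →
    ∃ x ∈ U, ∃ y ∈ U, x ≠ y ∧ A x y ∧ ReflTransGen (RisingArc A dep S) y x

theorem hasBackArcs_of_subsingleton {dep : V → ℕ} {S : Set V} (hS : S.Subsingleton) :
    HasBackArcs A dep S :=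
  fun _ hU _ hcyc => absurd (hS.anti hU) hcyc.nontrivial.not_subsingleton

theorem HasBackArcs.union {dep dep₁ dep₂ : V → ℕ} {S₁ S₂ : Set V} {k₁ k₂ : ℕ}
    (h₁ : HasBackArcs A dep₁ S₁) (h₂ : HasBackArcs A dep₂ S₂)
    (hdep₁ : ∀ v ∈ S₁, dep v = dep₁ v + k₁) (hdep₂ : ∀ v ∈ S₂, dep v = dep₂ v + k₂)
    (hcross : ∀ x ∈ S₁, ∀ y ∈ S₂, y ∉ S₁ → A x y →
      ReflTransGen (RisingArc A dep (S₁ ∪ S₂)) y x) :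
    HasBackArcs A dep (S₁ ∪ S₂) := by
  intro U hU ℓ hcyc
  obtain ⟨hℓ, u, hinj, hmem, harc⟩ := hcyc
  have : NeZero ℓ := ⟨by omega⟩
  by_cases hin₁ : ∀ i, u i ∈ S₁
  · obtain ⟨x, hx, y, hy, hne, hxy, hpath⟩ :=
      h₁ (U ∩ S₁) Set.inter_subset_right ℓ ⟨hℓ, u, hinj, fun i => ⟨hmem i, hin₁ i⟩, harc⟩
    exact ⟨x, hx.1, y, hy.1, hne, hxy,
      reflTransGen_risingArc_mono Set.subset_union_left hdep₁ hpath⟩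
  push Not at hin₁
  obtain ⟨j, hj⟩ := hin₁
  by_cases hout₁ : ∃ i, u i ∈ S₁
  · obtain ⟨i, hi⟩ := hout₁
    obtain ⟨k, hk, hk'⟩ := ZMod.exists_apply_and_not_apply_add_one (P := fun i => u i ∈ S₁) hi hj
    have hk₂ : u (k + 1) ∈ S₂ := (hU (hmem (k + 1))).resolve_left hk'
    exact ⟨u k, hmem k, u (k + 1), hmem (k + 1), fun h => hk' (h ▸ hk), harc k,
      hcross _ hk _ hk₂ hk' (harc k)⟩
  push Not at hout₁
  have hin₂ : ∀ i, u i ∈ S₂ := fun i => (hU (hmem i)).resolve_left (hout₁ i)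
  obtain ⟨x, hx, y, hy, hne, hxy, hpath⟩ :=
    h₂ (U ∩ S₂) Set.inter_subset_right ℓ ⟨hℓ, u, hinj, fun i => ⟨hmem i, hin₂ i⟩, harc⟩
  exact ⟨x, hx.1, y, hy.1, hne, hxy,
    reflTransGen_risingArc_mono Set.subset_union_right hdep₂ hpath⟩

/-- `dep` is the depth in a DFS tree, rooted at `r`, of the part `S` of `W` reachable from `r`;
the tree arcs are the rising arcs. -/
structure IsDFSTree (A : V → V → Prop) (W : Set V) (r : V) (S : Set V) (dep : V → ℕ) : Prop where
  subset : S ⊆ W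
  root_mem : r ∈ S
  closed : ∀ u ∈ S, ∀ v ∈ W, A u v → v ∈ S
  dep_root : dep r = 0
  reach : ∀ v ∈ S, ReflTransGen (RisingArc A dep S) r v
  hasBackArcs : HasBackArcs A dep S

theorem IsDFSTree.singleton {W : Set V} {r : V} (hr : r ∈ W) (hleaf : ∀ v ∈ W, A r v → v = r) :
    IsDFSTree A W r {r} (fun _ => 0) where
  subset := Set.singleton_subset_iff.2 hr
  root_mem := rfl
  closed u hu v hv huv := by rw [hu] at huv; exact hleaf v hv huv
  dep_root := rfl
  reach v hv := hv ▸ ReflTransGen.refl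
  hasBackArcs := hasBackArcs_of_subsingleton Set.subsingleton_singleton

open Classical in
/-- The DFS step: explore from the child `c` of `r` first, then resume from `r` on what is left. -/
theorem IsDFSTree.graft {W S₁ S₂ : Set V} {r c : V} {dep₁ dep₂ : V → ℕ} (hrc : A r c)
    (h₁ : IsDFSTree A (W \ {r}) c S₁ dep₁) (h₂ : IsDFSTree A (W \ S₁) r S₂ dep₂) :
    IsDFSTree A W r (S₁ ∪ S₂) (fun v => if v ∈ S₁ then dep₁ v + 1 else dep₂ v) := by
  set dep : V → ℕ := fun v => if v ∈ S₁ then dep₁ v + 1 else dep₂ v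
  have hdep₁ : ∀ v ∈ S₁, dep v = dep₁ v + 1 := fun v hv => if_pos hv
  have hdep₂ : ∀ v ∈ S₂, dep v = dep₂ v + 0 := fun v hv => if_neg (h₂.subset hv).2
  have hdep_root : dep r = 0 := by rw [hdep₂ r h₂.root_mem, h₂.dep_root]
  have hreach₁ : ∀ v ∈ S₁, ReflTransGen (RisingArc A dep (S₁ ∪ S₂)) r v := by
    intro v hv
    refine ReflTransGen.head ⟨Or.inr h₂.root_mem, Or.inl h₁.root_mem, hrc, ?_⟩
      (reflTransGen_risingArc_mono Set.subset_union_left hdep₁ (h₁.reach v hv))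
    rw [hdep₁ c h₁.root_mem, h₁.dep_root, hdep_root]
  refine ⟨Set.union_subset (h₁.subset.trans Set.sdiff_subset) (h₂.subset.trans Set.sdiff_subset),
    Or.inr h₂.root_mem, ?_, hdep_root, ?_, ?_⟩
  · rintro u (hu | hu) v hv huv
    · by_cases hvr : v = r
      · exact hvr ▸ Or.inr h₂.root_mem
      · exact Or.inl (h₁.closed u hu v ⟨hv, hvr⟩ huv)
    · by_cases hv₁ : v ∈ S₁
      · exact Or.inl hv₁
      · exact Or.inr (h₂.closed u hu v ⟨hv, hv₁⟩ huv)
  · rintro v (hv | hv)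
    · exact hreach₁ v hv
    · exact reflTransGen_risingArc_mono Set.subset_union_right hdep₂ (h₂.reach v hv)
  · refine h₁.hasBackArcs.union h₂.hasBackArcs hdep₁ hdep₂ fun x hx y hy hy₁ hxy => ?_
    have hyr : y = r := by
      by_contra hyr
      exact hy₁ (h₁.closed x hx y ⟨(h₂.subset hy).1, hyr⟩ hxy)
    exact hyr ▸ hreach₁ x hx

variable (A) in
theorem IsDFSTree.exists [Finite V] (W : Set V) {r : V} (hr : r ∈ W) :
    ∃ S dep, IsDFSTree A W r S dep := by
  induction W using WellFoundedLT.induction generalizing r with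
  | _ W ih =>
  by_cases hleaf : ∀ v ∈ W, A r v → v = r
  · exact ⟨_, _, .singleton hr hleaf⟩
  push Not at hleaf
  obtain ⟨c, hcW, hrc, hcr⟩ := hleaf
  obtain ⟨S₁, dep₁, h₁⟩ := ih (W \ {r}) (Set.sdiff_singleton_ssubset.2 hr) (r := c) ⟨hcW, hcr⟩
  have hrS₁ : r ∉ S₁ := fun h => (h₁.subset h).2 rfl
  obtain ⟨S₂, dep₂, h₂⟩ := ih (W \ S₁)
    (Set.sdiff_ssubset_left_iff.2 ⟨c, hcW, h₁.root_mem⟩) (r := r) ⟨hr, hrS₁⟩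
  exact ⟨_, _, h₁.graft hrc h₂⟩

variable (A) in
theorem exists_hasBackArcs [Finite V] (W : Set V) :
    ∃ dep, HasBackArcs A dep W := by
  classical
  induction W using WellFoundedLT.induction with
  | _ W ih =>
  rcases W.eq_empty_or_nonempty with rfl | ⟨r, hr⟩
  · exact ⟨fun _ => 0, hasBackArcs_of_subsingleton Set.subsingleton_empty⟩
  obtain ⟨S, dep₁, hT⟩ := IsDFSTree.exists A W hr
  obtain ⟨dep₂, h₂⟩ := ih (W \ S) (Set.sdiff_ssubset_left_iff.2 ⟨r, hr, hT.root_mem⟩)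
  refine ⟨fun v => if v ∈ S then dep₁ v else dep₂ v, ?_⟩
  rw [← Set.union_sdiff_cancel hT.subset]
  refine hT.hasBackArcs.union h₂ (k₁ := 0) (k₂ := 0) (fun v hv => if_pos hv)
    (fun v hv => if_neg hv.2) fun x hx y hy hyS hxy => ?_
  exact absurd (hT.closed x hx y hy.1 hxy) hyS

theorem Nat.div_mod_ne_of_le_of_le {p q m K : ℕ} (hq : 0 < q) (h₁ : q ≤ m) (h₂ : m ≤ K * q) :
    (p + m) / q % (K + 1) ≠ p / q % (K + 1) := by
  have hlo : p / q + 1 ≤ (p + m) / q := by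
    calc p / q + 1 = (p + q) / q := (Nat.add_div_right p hq).symm
      _ ≤ (p + m) / q := Nat.div_le_div_right (by omega)
  have hhi : (p + m) / q ≤ p / q + K := by
    calc (p + m) / q ≤ (p + K * q) / q := Nat.div_le_div_right (by omega)
      _ = p / q + K := Nat.add_mul_div_right p K hq
  obtain ⟨d, hd⟩ : ∃ d, (p + m) / q = p / q + d := ⟨_, (Nat.add_sub_of_le (by omega)).symm⟩
  intro hmod
  have hdvd : K + 1 ∣ d := by
    rw [← Nat.modEq_zero_iff_dvd]
    apply Nat.ModEq.add_left_cancel' (p / q)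
    rw [← hd, add_zero]
    exact hmod
  have := Nat.le_of_dvd (by omega) hdvd
  omega

theorem Nat.sub_one_le_ceil_div_mul (c g : ℕ) (hg : 2 ≤ g) :
    c - 1 ≤ ⌈((c : ℚ) - 1) / ((g : ℚ) - 1)⌉₊ * (g - 1) := by
  rcases Nat.eq_zero_or_pos c with rfl | hc
  · simp
  have hg' : (0 : ℚ) < g - 1 := by
    have : (2 : ℚ) ≤ g := by exact_mod_cast hg
    linarith
  have h := (div_le_iff₀ hg').1 (Nat.le_ceil (((c : ℚ) - 1) / ((g : ℚ) - 1)))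
  exact_mod_cast (by push_cast [Nat.cast_sub hc, Nat.cast_sub (by omega : 1 ≤ g)]; exact h :
    ((c - 1 : ℕ) : ℚ) ≤ ((⌈((c : ℚ) - 1) / ((g : ℚ) - 1)⌉₊ * (g - 1) : ℕ) : ℚ))

end

theorem stmt_2_general {V : Type*} [Fintype V] (A : V → V → Prop)
    (g c : ℕ)
    (hg : HasCycleLen A g) (hgmin : ∀ ℓ, HasCycleLen A ℓ → g ≤ ℓ)
    (hcmax : ∀ ℓ, HasCycleLen A ℓ → ℓ ≤ c) :
    dichromatic A ≤ ⌈((c : ℚ) - 1) / ((g : ℚ) - 1)⌉₊ + 1 := by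
  set K := ⌈((c : ℚ) - 1) / ((g : ℚ) - 1)⌉₊
  have hg2 : 2 ≤ g := hg.1
  have hcK : c - 1 ≤ K * (g - 1) := Nat.sub_one_le_ceil_div_mul c g hg2
  obtain ⟨dep, hdep⟩ := exists_hasBackArcs A Set.univ
  refine Nat.sInf_le ⟨fun v => ⟨dep v / (g - 1) % (K + 1), Nat.mod_lt _ K.succ_pos⟩, ?_⟩
  intro i ℓ hcyc
  obtain ⟨x, hx, y, hy, hne, hxy, hpath⟩ := hdep _ (Set.subset_univ _) ℓ hcyc
  obtain ⟨m, hm, hcycm⟩ := exists_hasCycleLen_of_risingArc hpath hxy hne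
  have hlen₁ := hgmin _ hcycm
  have hlen₂ := hcmax _ hcycm
  refine Nat.div_mod_ne_of_le_of_le (p := dep y) (q := g - 1) (m := m) (K := K)
    (by omega) (by omega) (by omega) ?_
  rw [← hm]
  exact congrArg Fin.val (hx.trans hy.symm)

/-- If `D` is a digraph with at least one directed cycle, girth `g` and circumference `c`,
then `χ_A(D) ≤ ⌈(c − 1)/(g − 1)⌉ + 1`. -/
theorem stmt_2 {V : Type*} [Fintype V] (A : V → V → Prop) (hloopless : Irreflexive A)
    (g c : ℕ)
    (hg : HasCycleLen A g) (hgmin : ∀ ℓ, HasCycleLen A ℓ → g ≤ ℓ)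
    (hc : HasCycleLen A c) (hcmax : ∀ ℓ, HasCycleLen A ℓ → ℓ ≤ c) :
    dichromatic A ≤ ⌈((c : ℚ) - 1) / ((g : ℚ) - 1)⌉₊ + 1 :=
  stmt_2_general A g c hg hgmin hcmax
end

section
/- Let D be a digraph with at least one directed cycle, with girth g and circumference c, and suppose g − 1 ≤ c − g + 2. Then χ_A(D) ≤ c − g + 2. -/
/-!
Take a depth-first search forest of `D`, with depth function `dep`. Every directed cycle contains
a back arc `x → y` to an ancestor `y` of `x`, and the tree path from `y` to `x` closes with it to a
cycle of length `dep x - dep y + 1`; hence `g - 1 ≤ dep x - dep y ≤ c - 1`. Colour `v` by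
`⌊dep v / (g - 1)⌋ mod (c - g + 2)`: the quotients of `dep x` and `dep y` by `g - 1` differ by at
least `1` and at most `⌈(c - 1) / (g - 1)⌉ ≤ c - g + 1`, so the ends of that back arc get
different colours and no colour class contains a cycle.

The forest is built by induction on the number of vertices: a root `n` with the vertices `R` it
reaches, a forest of `R \ {n}` rooted at out-neighbours of `n` hung below `n`, and then a forest
of the remaining vertices, which no arc from `R` can reach.
-/

open Relation

section DepthFirstForest

variable {V : Type*}

def InducedArc (A : V → V → Prop) (s : Set V) (a b : V) : Prop :=
  a ∈ s ∧ b ∈ s ∧ A a b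

def TreeArc (A : V → V → Prop) (s : Set V) (dep : V → ℕ) (a b : V) : Prop :=
  InducedArc A s a b ∧ dep b = dep a + 1

/-- A depth-first search forest of the subdigraph induced by `s`, with roots in `N`: tree arcs
raise the depth `dep` by one, and `rank` is the finishing order, so that an arc which does not
lower the rank is a back arc to an ancestor. -/
structure IsDFSForest (A : V → V → Prop) (s N : Set V) (dep rank : V → ℕ) : Prop where
  exists_root : ∀ v ∈ s, ∃ m ∈ N, dep m = 0 ∧ ReflTransGen (TreeArc A s dep) m v
  arc : ∀ x y, InducedArc A s x y → rank y < rank x ∨ ReflTransGen (TreeArc A s dep) y x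

variable {A : V → V → Prop}

lemma reflTransGen_inducedArc_mem_iff {s : Set V} {a b : V}
    (h : ReflTransGen (InducedArc A s) a b) : a ∈ s ↔ b ∈ s := by
  rcases h.cases_head with rfl | ⟨c, hac, -⟩
  · rfl
  rcases h.cases_tail with rfl | ⟨c', -, hcb⟩
  · rfl
  exact iff_of_true hac.1 hcb.2.1

lemma reflTransGen_treeArc_mono {s t : Set V} {d d' : V → ℕ} (k : ℕ) (hst : s ⊆ t)
    (hd : ∀ v ∈ s, d' v = d v + k) {a b : V} (h : ReflTransGen (TreeArc A s d) a b) :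
    ReflTransGen (TreeArc A t d') a b :=
  ReflTransGen.mono (fun x y ⟨⟨hx, hy, hxy⟩, hdxy⟩ =>
    ⟨⟨hst hx, hst hy, hxy⟩, by rw [hd x hx, hd y hy, hdxy]; omega⟩) _ _ h

lemma reflTransGen_treeArc_mem_of_mem {s : Set V} {dep : V → ℕ} {a b : V}
    (h : ReflTransGen (TreeArc A s dep) a b) (hb : b ∈ s) : a ∈ s :=
  (reflTransGen_inducedArc_mem_iff (ReflTransGen.mono (fun _ _ h => h.1) _ _ h)).2 hb

lemma reflTransGen_inducedArc_diff {s R : Set V}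
    (hR : ∀ x y, x ∈ R → InducedArc A s x y → y ∈ R) {m v : V}
    (h : ReflTransGen (InducedArc A s) m v) (hv : v ∉ R) :
    ReflTransGen (InducedArc A (s \ R)) m v := by
  induction h with
  | refl => rfl
  | tail _ hbc ih =>
    have hb : _ ∉ R := fun hb => hv (hR _ _ hb hbc)
    exact (ih hb).tail ⟨⟨hbc.1, hb⟩, ⟨hbc.2.1, hv⟩, hbc.2.2⟩

lemma exists_reflTransGen_inducedArc_diff_singleton {s : Set V} {n v : V}
    (h : ReflTransGen (InducedArc A s) n v) (hv : v ≠ n) :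
    ∃ m, A n m ∧
      ReflTransGen (InducedArc A ({w | ReflTransGen (InducedArc A s) n w} \ {n})) m v := by
  induction h with
  | refl => exact absurd rfl hv
  | @tail b c hnb hbc ih =>
    by_cases hb : b = n
    · subst hb
      exact ⟨c, hbc.2.2, .refl⟩
    · obtain ⟨m, hm, hmb⟩ := ih hb
      exact ⟨m, hm, hmb.tail ⟨⟨hnb, hb⟩, ⟨hnb.tail hbc, hv⟩, hbc.2.2⟩⟩

lemma IsDFSForest.insert_root [Fintype V] {R : Set V} {n : V} {d r : V → ℕ} (hnR : n ∈ R)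
    (h : IsDFSForest A (R \ {n}) {m | A n m} d r) : ∃ dep rank, IsDFSForest A R {n} dep rank := by
  classical
  set B := Finset.univ.sup r + 1
  set dep : V → ℕ := fun v => if v = n then 0 else d v + 1
  set rank : V → ℕ := fun v => if v = n then B else r v
  have hrB : ∀ v, r v < B := fun v => Nat.lt_succ_of_le (Finset.le_sup (Finset.mem_univ v))
  have below_root : ∀ v ∈ R \ {n}, ReflTransGen (TreeArc A R dep) n v := fun v hv => by
    obtain ⟨m, hm, hm0, hmv⟩ := h.exists_root v hv
    have hmR : m ∈ R \ {n} := reflTransGen_treeArc_mem_of_mem hmv hv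
    have hdep : ∀ w ∈ R \ {n}, dep w = d w + 1 := fun w hw => if_neg hw.2
    refine .head ⟨⟨hnR, hmR.1, hm⟩, by simp [hdep m hmR, hm0, dep]⟩ ?_
    exact reflTransGen_treeArc_mono 1 Set.sdiff_subset hdep hmv
  refine ⟨dep, rank, ⟨fun v hv => ?_, fun x y hxy => ?_⟩⟩
  · by_cases hvn : v = n
    · exact ⟨n, rfl, by simp [dep], hvn ▸ .refl⟩
    · exact ⟨n, rfl, by simp [dep], below_root v ⟨hv, hvn⟩⟩
  by_cases hxn : x = n <;> by_cases hyn : y = n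
  · exact .inr (hxn ▸ hyn ▸ .refl)
  · exact .inl (by simpa [rank, hxn, hyn] using hrB y)
  · exact .inr (hyn ▸ below_root x ⟨hxy.1, hxn⟩)
  · rcases h.arc x y ⟨⟨hxy.1, hxn⟩, ⟨hxy.2.1, hyn⟩, hxy.2.2⟩ with hr | hp
    · exact .inl (by simpa [rank, hxn, hyn] using hr)
    · exact .inr (reflTransGen_treeArc_mono 1 Set.sdiff_subset (fun w hw => if_neg hw.2) hp)

/-- No arc leaves `R`, so the arcs between the two forests go from `s \ R` into `R` and lower
the rank. -/
lemma IsDFSForest.union [Fintype V] {s R N₁ N : Set V} {d₁ r₁ d₂ r₂ : V → ℕ} (hRs : R ⊆ s)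
    (hR : ∀ x y, x ∈ R → InducedArc A s x y → y ∈ R) (hN₁ : N₁ ⊆ N)
    (h₁ : IsDFSForest A R N₁ d₁ r₁) (h₂ : IsDFSForest A (s \ R) N d₂ r₂) :
    ∃ dep rank, IsDFSForest A s N dep rank := by
  classical
  set B := Finset.univ.sup r₁ + 1
  set dep : V → ℕ := fun v => if v ∈ R then d₁ v else d₂ v
  set rank : V → ℕ := fun v => if v ∈ R then r₁ v else B + r₂ v
  have hr₁B : ∀ v, r₁ v < B := fun v => Nat.lt_succ_of_le (Finset.le_sup (Finset.mem_univ v))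
  have hdep₁ : ∀ v ∈ R, dep v = d₁ v + 0 := fun v hv => if_pos hv
  have hdep₂ : ∀ v ∈ s \ R, dep v = d₂ v + 0 := fun v hv => if_neg hv.2
  refine ⟨dep, rank, ⟨fun v hv => ?_, fun x y hxy => ?_⟩⟩
  · by_cases hvR : v ∈ R
    · obtain ⟨m, hm, hm0, hmv⟩ := h₁.exists_root v hvR
      have hmR := reflTransGen_treeArc_mem_of_mem hmv hvR
      exact ⟨m, hN₁ hm, by rw [hdep₁ m hmR, hm0], reflTransGen_treeArc_mono 0 hRs hdep₁ hmv⟩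
    · obtain ⟨m, hm, hm0, hmv⟩ := h₂.exists_root v ⟨hv, hvR⟩
      have hmS := reflTransGen_treeArc_mem_of_mem hmv ⟨hv, hvR⟩
      exact ⟨m, hm, by rw [hdep₂ m hmS, hm0],
        reflTransGen_treeArc_mono 0 Set.sdiff_subset hdep₂ hmv⟩
  by_cases hxR : x ∈ R
  · have hyR := hR x y hxR hxy
    rcases h₁.arc x y ⟨hxR, hyR, hxy.2.2⟩ with hr | hp
    · exact .inl (by simpa [rank, hxR, hyR] using hr)
    · exact .inr (reflTransGen_treeArc_mono 0 hRs hdep₁ hp)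
  by_cases hyR : y ∈ R
  · exact .inl (by simp only [rank, hxR, hyR, if_true, if_false]; have := hr₁B y; omega)
  · rcases h₂.arc x y ⟨⟨hxy.1, hxR⟩, ⟨hxy.2.1, hyR⟩, hxy.2.2⟩ with hr | hp
    · exact .inl (by simpa [rank, hxR, hyR] using hr)
    · exact .inr (reflTransGen_treeArc_mono 0 Set.sdiff_subset hdep₂ hp)

theorem exists_isDFSForest [Fintype V] (s N : Set V)
    (hN : ∀ v ∈ s, ∃ m ∈ N, ReflTransGen (InducedArc A s) m v) :
    ∃ dep rank, IsDFSForest A s N dep rank := by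
  induction hk : s.ncard using Nat.strong_induction_on generalizing s N with
  | _ k ih =>
  rcases s.eq_empty_or_nonempty with rfl | ⟨v, hv⟩
  · exact ⟨0, 0, ⟨by simp, fun x y h => h.1.elim⟩⟩
  obtain ⟨n, hn, hnv⟩ := hN v hv
  have hns : n ∈ s := (reflTransGen_inducedArc_mem_iff hnv).2 hv
  set R := {w | ReflTransGen (InducedArc A s) n w}
  have hRs : R ⊆ s := fun w hw => (reflTransGen_inducedArc_mem_iff hw).1 hns
  have hR : ∀ x y, x ∈ R → InducedArc A s x y → y ∈ R := fun x y hx hxy => hx.tail hxy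
  have hlt₁ : (R \ {n}).ncard < k :=
    hk ▸ (Set.ncard_sdiff_singleton_lt_of_mem .refl).trans_le (Set.ncard_le_ncard hRs)
  have hlt₂ : (s \ R).ncard < k :=
    hk ▸ Set.ncard_lt_ncard (Set.sdiff_ssubset_left_iff.2 ⟨n, hns, .refl⟩)
  obtain ⟨d₁, r₁, h₁⟩ := ih _ hlt₁ (R \ {n}) {m | A n m}
    (fun w hw => exists_reflTransGen_inducedArc_diff_singleton hw.1 hw.2) rfl
  obtain ⟨d₂, r₂, h₂⟩ := ih _ hlt₂ (s \ R) N (fun w hw =>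
    let ⟨m, hm, hmw⟩ := hN w hw.1; ⟨m, hm, reflTransGen_inducedArc_diff hR hmw hw.2⟩) rfl
  obtain ⟨d₀, r₀, h₀⟩ := h₁.insert_root (show n ∈ R from .refl)
  exact h₀.union hRs hR (Set.singleton_subset_iff.2 hn) h₂

lemma exists_path_of_reflTransGen_treeArc {s : Set V} {dep : V → ℕ} {y x : V}
    (h : ReflTransGen (TreeArc A s dep) y x) :
    ∃ a : ℕ → V, a 0 = y ∧ a (dep x - dep y) = x ∧ dep y ≤ dep x ∧
      (∀ i < dep x - dep y, A (a i) (a (i + 1))) ∧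
      ∀ i ≤ dep x - dep y, dep (a i) = dep y + i := by
  induction h with
  | refl =>
    refine ⟨fun _ => y, rfl, rfl, le_rfl, fun i hi => by omega, fun i hi => ?_⟩
    obtain rfl : i = 0 := by omega
    rfl
  | @tail b c _ hbc ih =>
    obtain ⟨a, ha0, hab, hle, harc, hdep⟩ := ih
    have hc : dep c = dep b + 1 := hbc.2
    refine ⟨fun i => if i ≤ dep b - dep y then a i else c, by simp [ha0],
      if_neg (by omega), by omega, fun i hi => ?_, fun i hi => ?_⟩
    · by_cases hib : i < dep b - dep y
      · simpa [hib.le, Nat.succ_le_of_lt hib] using harc i hib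
      · have hib : i = dep b - dep y := by omega
        simpa [hib, hab] using hbc.1.2.2
    · by_cases hib : i ≤ dep b - dep y
      · simpa [hib] using hdep i hib
      · simp only [hib, if_false]; omega

lemma hasCycleLen_of_path {a : ℕ → V} {k : ℕ} (hk : 1 ≤ k) (harc : ∀ i < k, A (a i) (a (i + 1)))
    (hclose : A (a k) (a 0)) (hinj : ∀ i ≤ k, ∀ j ≤ k, a i = a j → i = j) :
    HasCycleLen A (k + 1) := by
  refine ⟨by omega, fun j => a j.val, fun i j hij => ZMod.val_injective _
    (hinj _ ?_ _ ?_ hij), fun _ => trivial, fun j => ?_⟩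
  · have := ZMod.val_lt i; omega
  · have := ZMod.val_lt j; omega
  · have : Fact (1 < k + 1) := ⟨by omega⟩
    change A (a j.val) (a (j + 1).val)
    rw [ZMod.val_add, ZMod.val_one]
    rcases (Nat.lt_succ_iff.1 (ZMod.val_lt j)).lt_or_eq with hj | hj
    · rw [Nat.mod_eq_of_lt (by omega)]
      exact harc _ hj
    · rwa [hj, Nat.mod_self]

lemma hasCycleLen_of_reflTransGen_treeArc {s : Set V} {dep : V → ℕ} {x y : V}
    (h : ReflTransGen (TreeArc A s dep) y x) (hxy : A x y) (hne : x ≠ y) :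
    dep y < dep x ∧ HasCycleLen A (dep x - dep y + 1) := by
  obtain ⟨a, ha0, hax, hle, harc, hdep⟩ := exists_path_of_reflTransGen_treeArc h
  have hlt : dep y < dep x :=
    lt_of_le_of_ne hle fun heq => hne (by rw [← hax, ← heq, Nat.sub_self, ha0])
  refine ⟨hlt, hasCycleLen_of_path (by omega) harc (by rwa [hax, ha0]) fun i hi j hj hij => ?_⟩
  have := congrArg dep hij
  rw [hdep i hi, hdep j hj] at this
  omega

theorem IsDFSForest.exists_backArc {N : Set V} {dep rank : V → ℕ}
    (hF : IsDFSForest A Set.univ N dep rank) {U : Set V} {ℓ : ℕ} (hC : CycleOn A U ℓ) :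
    ∃ x ∈ U, ∃ y ∈ U, dep y < dep x ∧ HasCycleLen A (dep x - dep y + 1) := by
  obtain ⟨hℓ, u, hinj, hU, harc⟩ := hC
  have : NeZero ℓ := ⟨by omega⟩
  have : Fact (1 < ℓ) := ⟨by omega⟩
  obtain ⟨i, hi⟩ := Finite.exists_min (rank ∘ u)
  have hne : u i ≠ u (i + 1) := fun h => one_ne_zero (add_eq_left.1 (hinj h).symm)
  have hback := (hF.arc _ _ ⟨trivial, trivial, harc i⟩).resolve_left (not_lt.2 (hi (i + 1)))
  exact ⟨u i, hU i, u (i + 1), hU _, hasCycleLen_of_reflTransGen_treeArc hback (harc i) hne⟩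

end DepthFirstForest

lemma div_mod_ne_of_le_of_le {a t y Δ : ℕ} (ha : 0 < a) (h₁ : a ≤ Δ) (h₂ : Δ ≤ a + t) :
    y / a % (t + 2) ≠ (y + Δ) / a % (t + 2) := by
  intro h
  have hlo : y / a < (y + Δ) / a := by
    calc y / a < y / a + 1 := Nat.lt_succ_self _
      _ = (y + a) / a := (Nat.add_div_right y ha).symm
      _ ≤ (y + Δ) / a := Nat.div_le_div_right (by omega)
  have hhi : (y + Δ) / a < y / a + (t + 2) := by
    by_contra! hge
    have h₃ := Nat.div_mul_le_self (y + Δ) a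
    have h₄ := Nat.lt_div_mul_add (a := y) ha
    have h₅ := Nat.mul_le_mul_right a hge
    nlinarith
  have hdvd := Nat.dvd_of_mod_eq_zero (Nat.sub_mod_eq_zero_of_mod_eq h.symm)
  exact absurd (Nat.eq_zero_of_dvd_of_lt hdvd (by omega)) (by omega)

theorem stmt_3_general {V : Type*} [Fintype V] (A : V → V → Prop)
    (g c : ℕ)
    (hg : HasCycleLen A g) (hgmin : ∀ ℓ, HasCycleLen A ℓ → g ≤ ℓ)
    (hcmax : ∀ ℓ, HasCycleLen A ℓ → ℓ ≤ c) :
    dichromatic A ≤ c - g + 2 := by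
  obtain ⟨dep, rank, hF⟩ :=
    exists_isDFSForest (A := A) Set.univ Set.univ fun v _ => ⟨v, trivial, .refl⟩
  have hg₂ : 2 ≤ g := hg.1
  refine Nat.sInf_le ⟨fun v => ⟨dep v / (g - 1) % (c - g + 2), Nat.mod_lt _ (by omega)⟩,
    fun i ℓ hC => ?_⟩
  obtain ⟨x, hx, y, hy, hlt, hL⟩ := hF.exists_backArc hC
  have hgL := hgmin _ hL
  have hLc := hcmax _ hL
  obtain ⟨Δ, hΔ⟩ := Nat.exists_eq_add_of_le hlt.le
  refine div_mod_ne_of_le_of_le (a := g - 1) (t := c - g) (y := dep y) (Δ := Δ)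
    (by omega) (by omega) (by omega) ?_
  rw [← hΔ]
  exact congrArg Fin.val (hy.trans hx.symm)

/-- If `D` is a digraph with at least one directed cycle, girth `g` and circumference `c`,
and `g − 1 ≤ c − g + 2`, then `χ_A(D) ≤ c − g + 2`. -/
theorem stmt_3 {V : Type*} [Fintype V] (A : V → V → Prop) (hloopless : Irreflexive A)
    (g c : ℕ)
    (hg : HasCycleLen A g) (hgmin : ∀ ℓ, HasCycleLen A ℓ → g ≤ ℓ)
    (hc : HasCycleLen A c) (hcmax : ∀ ℓ, HasCycleLen A ℓ → ℓ ≤ c)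
    (hineq : g - 1 ≤ c - g + 2) :
    dichromatic A ≤ c - g + 2 :=
  stmt_3_general A g c hg hgmin hcmax
end

section
/- Let D be a strongly connected digraph with girth g, and let k and p be integers with k ≥ g − 1 ≥ p ≥ 1 and p dividing k. If for every integer r with −p + 2 ≤ r ≤ p the digraph D has no directed cycle whose length is congruent to r modulo k, then χ_A(D) ≤ k/p. -/
namespace DFS6

variable {V : Type*}

/-- A directed path from `y` to `x`, all of whose vertices lie in `S`, along which the
function `dep` increases by exactly one at each step. -/
def ChainIn (A : V → V → Prop) (S : Set V) (dep : V → ℕ) (y x : V) : Prop :=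
  ∃ m, 1 ≤ m ∧ ∃ w : ℕ → V, w 0 = y ∧ w m = x ∧ (∀ i, i ≤ m → w i ∈ S) ∧
    (∀ i, i < m → A (w i) (w (i + 1))) ∧ (∀ i, i ≤ m → dep (w i) = dep y + i)

variable {A : V → V → Prop} {S S' : Set V} {dep dep' : V → ℕ} {x y z : V}

theorem ChainIn.mono (h : ChainIn A S dep y x) (hS : S ⊆ S') : ChainIn A S' dep y x := by
  obtain ⟨m, hm, w, h0, h1, hmem, harc, hdep⟩ := h
  exact ⟨m, hm, w, h0, h1, fun i hi => hS (hmem i hi), harc, hdep⟩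

theorem ChainIn.congr (h : ChainIn A S dep y x) (hd : ∀ v ∈ S, dep' v = dep v) :
    ChainIn A S dep' y x := by
  obtain ⟨m, hm, w, h0, h1, hmem, harc, hdep⟩ := h
  refine ⟨m, hm, w, h0, h1, hmem, harc, fun i hi => ?_⟩
  have hy : dep' y = dep y := by rw [← h0]; exact hd _ (hmem 0 (Nat.zero_le m))
  rw [hd _ (hmem i hi), hdep i hi, hy]

theorem ChainIn.single (hxy : A y x) (hy : y ∈ S) (hx : x ∈ S) (hd : dep x = dep y + 1) :
    ChainIn A S dep y x := by
  refine ⟨1, le_rfl, fun i => if i = 0 then y else x, by simp, by simp, ?_, ?_, ?_⟩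
  · intro i hi; interval_cases i <;> simp [hy, hx]
  · intro i hi; interval_cases i; simpa using hxy
  · intro i hi; interval_cases i <;> simp [hd]

theorem ChainIn.comp (h1 : ChainIn A S dep y z) (h2 : ChainIn A S dep z x) :
    ChainIn A S dep y x := by
  obtain ⟨m1, hm1, w1, h10, h11, hmem1, harc1, hdep1⟩ := h1
  obtain ⟨m2, hm2, w2, h20, h21, hmem2, harc2, hdep2⟩ := h2
  have hdz : dep z = dep y + m1 := by rw [← h11]; exact hdep1 m1 le_rfl
  refine ⟨m1 + m2, by omega, fun i => if i < m1 then w1 i else w2 (i - m1), ?_, ?_, ?_, ?_, ?_⟩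
  · beta_reduce
    rw [if_pos (show (0:ℕ) < m1 by omega)]; exact h10
  · beta_reduce
    rw [if_neg (show ¬ (m1 + m2 < m1) by omega), Nat.add_sub_cancel_left]; exact h21
  · intro i hi
    beta_reduce
    by_cases h : i < m1
    · rw [if_pos h]; exact hmem1 i (by omega)
    · rw [if_neg h]; exact hmem2 (i - m1) (by omega)
  · intro i hi
    beta_reduce
    rcases Nat.lt_or_ge (i + 1) m1 with h | h
    · rw [if_pos (show i < m1 by omega), if_pos h]; exact harc1 i (by omega)
    · by_cases hil : i < m1
      · have he : i + 1 = m1 := by omega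
        rw [if_pos hil, if_neg (show ¬ (i + 1 < m1) by omega)]
        have hw : w2 (i + 1 - m1) = w1 (i + 1) := by
          rw [show i + 1 - m1 = 0 by omega, h20, ← h11, he]
        rw [hw]; exact harc1 i (by omega)
      · rw [if_neg hil, if_neg (show ¬ (i + 1 < m1) by omega),
          show i + 1 - m1 = (i - m1) + 1 by omega]
        exact harc2 (i - m1) (by omega)
  · intro i hi
    beta_reduce
    by_cases h : i < m1
    · rw [if_pos h]; exact hdep1 i (by omega)
    · rw [if_neg h]
      have e1 := hdep2 (i - m1) (by omega)
      rw [e1, hdz]; omega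

/-- The packaged conclusion of exploring (DFS) from a root `r` inside the white set `W`. -/
def ExplSpec (A : V → V → Prop) (W : Finset V) (r : V) (d₀ t₀ : ℕ) : Prop :=
  ∃ (R : Finset V) (dep fin : V → ℕ),
    r ∈ R ∧ R ⊆ W ∧ dep r = d₀ ∧
    (∀ x ∈ R, t₀ ≤ fin x ∧ fin x < t₀ + R.card) ∧
    (∀ x ∈ R, x ≠ r → fin x < fin r) ∧
    (∀ x ∈ R, x = r ∨ ChainIn A (↑R) dep r x) ∧
    (∀ x ∈ R, ∀ y, A x y → y ∈ W → y ∈ R) ∧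
    (∀ x ∈ R, ∀ y ∈ R, A x y → ChainIn A (↑R) dep y x ∨ fin y < fin x)

/-- The packaged conclusion of sequentially exploring from the candidate children in `ns`
(children of a root `r` at depth `d₁ - 1`) inside the white set `U`. -/
def BSpec (A : V → V → Prop) (r : V) (d₁ : ℕ) (ns : List V) (U : Finset V) (t : ℕ) : Prop :=
  ∃ (Rc : Finset V) (dep fin : V → ℕ),
    Rc ⊆ U ∧
    (∀ x ∈ Rc, t ≤ fin x ∧ fin x < t + Rc.card) ∧
    (∀ n ∈ ns, A r n → n ∈ U → n ∈ Rc) ∧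
    (∀ x ∈ Rc, ∃ n ∈ Rc, A r n ∧ dep n = d₁ ∧ (x = n ∨ ChainIn A (↑Rc) dep n x)) ∧
    (∀ x ∈ Rc, ∀ y, A x y → y ∈ U → y ∈ Rc) ∧
    (∀ x ∈ Rc, ∀ y ∈ Rc, A x y → ChainIn A (↑Rc) dep y x ∨ fin y < fin x)

theorem exploreB [DecidableEq V] (A : V → V → Prop) (N : ℕ)
    (IH : ∀ W : Finset V, W.card < N → ∀ r ∈ W, ∀ d₀ t₀ : ℕ, ExplSpec A W r d₀ t₀)
    (r : V) (d₁ : ℕ) :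
    ∀ (ns : List V) (U : Finset V), U.card < N → ∀ t : ℕ, BSpec A r d₁ ns U t := by
  intro ns
  induction ns with
  | nil =>
    intro U hU t
    refine ⟨∅, fun _ => 0, fun _ => 0, ?_, ?_, ?_, ?_, ?_, ?_⟩ <;> simp
  | cons n rest ihrest =>
    intro U hU t
    by_cases hn : n ∈ U ∧ A r n
    · obtain ⟨R₁, dep1, fin1, hnR₁, hR₁U, hdep1n, hfb1, hfmax1, hch1, hcl1, hmain1⟩ :=
        IH U hU n hn.1 d₁ t
      obtain ⟨R₂, dep2, fin2, hR₂U, hfb2, hproc2, hch2, hcl2, hmain2⟩ :=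
        ihrest (U \ R₁) (lt_of_le_of_lt (Finset.card_le_card Finset.sdiff_subset) hU)
          (t + R₁.card)
      have hdisj : Disjoint R₁ R₂ := by
        rw [Finset.disjoint_left]
        intro a ha1 ha2
        exact (Finset.mem_sdiff.1 (hR₂U ha2)).2 ha1
      have hnot2 : ∀ v ∈ R₁, v ∉ R₂ := fun v hv => Finset.disjoint_left.1 hdisj hv
      have hnot1 : ∀ v ∈ R₂, v ∉ R₁ := fun v hv => Finset.disjoint_right.1 hdisj hv
      have hcard : (R₁ ∪ R₂).card = R₁.card + R₂.card := Finset.card_union_of_disjoint hdisj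
      refine ⟨R₁ ∪ R₂, fun v => if v ∈ R₁ then dep1 v else dep2 v,
        fun v => if v ∈ R₁ then fin1 v else fin2 v, ?_, ?_, ?_, ?_, ?_, ?_⟩
      · exact Finset.union_subset hR₁U (hR₂U.trans Finset.sdiff_subset)
      · intro x hx
        beta_reduce
        rcases Finset.mem_union.1 hx with hx1 | hx2
        · rw [if_pos hx1]
          have := hfb1 x hx1
          omega
        · rw [if_neg (hnot1 x hx2)]
          have := hfb2 x hx2
          omega
      · intro n' hn' hArn' hn'U
        rcases List.mem_cons.1 hn' with h | h
        · subst h; exact Finset.mem_union_left _ hnR₁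
        · by_cases hn'R₁ : n' ∈ R₁
          · exact Finset.mem_union_left _ hn'R₁
          · exact Finset.mem_union_right _
              (hproc2 n' h hArn' (Finset.mem_sdiff.2 ⟨hn'U, hn'R₁⟩))
      · intro x hx
        rcases Finset.mem_union.1 hx with hx1 | hx2
        · refine ⟨n, Finset.mem_union_left _ hnR₁, hn.2,
            by beta_reduce; rw [if_pos hnR₁]; exact hdep1n, ?_⟩
          rcases hch1 x hx1 with h | h
          · exact Or.inl h
          · refine Or.inr ((h.congr ?_).mono (Finset.coe_subset.2 Finset.subset_union_left))
            intro v hv; exact if_pos hv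
        · obtain ⟨n', hn'R₂, hArn', hdepn', hxch⟩ := hch2 x hx2
          refine ⟨n', Finset.mem_union_right _ hn'R₂,
            hArn', by beta_reduce; rw [if_neg (hnot1 n' hn'R₂)]; exact hdepn', ?_⟩
          rcases hxch with h | h
          · exact Or.inl h
          · refine Or.inr ((h.congr ?_).mono (Finset.coe_subset.2 Finset.subset_union_right))
            intro v hv; exact if_neg (hnot1 v hv)
      · intro x hx y hAxy hyU
        rcases Finset.mem_union.1 hx with hx1 | hx2
        · exact Finset.mem_union_left _ (hcl1 x hx1 y hAxy hyU)
        · by_cases hyR₁ : y ∈ R₁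
          · exact Finset.mem_union_left _ hyR₁
          · exact Finset.mem_union_right _
              (hcl2 x hx2 y hAxy (Finset.mem_sdiff.2 ⟨hyU, hyR₁⟩))
      · intro x hx y hy hAxy
        rcases Finset.mem_union.1 hx with hx1 | hx2 <;> rcases Finset.mem_union.1 hy with hy1 | hy2
        · rcases hmain1 x hx1 y hy1 hAxy with h | h
          · refine Or.inl ((h.congr ?_).mono (Finset.coe_subset.2 Finset.subset_union_left))
            intro v hv; exact if_pos hv
          · beta_reduce
            rw [if_pos hx1, if_pos hy1]; exact Or.inr h
        · exact absurd (hcl1 x hx1 y hAxy (Finset.sdiff_subset (hR₂U hy2))) (hnot1 y hy2)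
        · refine Or.inr ?_
          beta_reduce
          rw [if_pos hy1, if_neg (hnot1 x hx2)]
          have h1 := hfb1 y hy1
          have h2 := hfb2 x hx2
          omega
        · rcases hmain2 x hx2 y hy2 hAxy with h | h
          · refine Or.inl ((h.congr ?_).mono (Finset.coe_subset.2 Finset.subset_union_right))
            intro v hv; exact if_neg (hnot1 v hv)
          · beta_reduce
            rw [if_neg (hnot1 x hx2), if_neg (hnot1 y hy2)]; exact Or.inr h
    · obtain ⟨Rc, dep, fin, h1, h2, h3, h4, h5, h6⟩ := ihrest U hU t
      refine ⟨Rc, dep, fin, h1, h2, ?_, h4, h5, h6⟩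
      intro n' hn' hArn' hn'U
      rcases List.mem_cons.1 hn' with h | h
      · subst h; exact absurd ⟨hn'U, hArn'⟩ hn
      · exact h3 n' h hArn' hn'U

theorem exploreA [DecidableEq V] (A : V → V → Prop) (hA : Irreflexive A) (N : ℕ) :
    ∀ W : Finset V, W.card < N → ∀ r ∈ W, ∀ d₀ t₀ : ℕ, ExplSpec A W r d₀ t₀ := by
  induction N with
  | zero => intro W hW; exact absurd hW (Nat.not_lt_zero _)
  | succ N ihN =>
    intro W hW r hr d₀ t₀
    have hWpos : 0 < W.card := Finset.card_pos.2 ⟨r, hr⟩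
    have hWe : (W.erase r).card < N := by
      have := Finset.card_erase_of_mem hr
      omega
    obtain ⟨Rc, dep0, fin0, hRcU, hfb, hproc, hchd, hcld, hmaind⟩ :=
      exploreB A N ihN r (d₀ + 1) (W.erase r).toList (W.erase r) hWe t₀
    have hrRc : r ∉ Rc := fun h => Finset.notMem_erase r W (hRcU h)
    have hcardR : (insert r Rc).card = Rc.card + 1 := Finset.card_insert_of_notMem hrRc
    set dep : V → ℕ := fun v => if v = r then d₀ else dep0 v with hdepdef
    set fin : V → ℕ := fun v => if v = r then t₀ + Rc.card else fin0 v with hfindef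
    have hdep_r : dep r = d₀ := by simp [hdepdef]
    have hfin_r : fin r = t₀ + Rc.card := by simp [hfindef]
    have hdep_c : ∀ v ∈ Rc, dep v = dep0 v := by
      intro v hv
      have hvr : v ≠ r := fun h => hrRc (h ▸ hv)
      simp [hdepdef, hvr]
    have hfin_c : ∀ v ∈ Rc, fin v = fin0 v := by
      intro v hv
      have hvr : v ≠ r := fun h => hrRc (h ▸ hv)
      simp [hfindef, hvr]
    have hchR : ∀ x ∈ Rc, ChainIn A (↑(insert r Rc)) dep r x := by
      intro x hx
      obtain ⟨n, hnRc, hArn, hdepn, hxn⟩ := hchd x hx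
      have hchain1 : ChainIn A (↑(insert r Rc)) dep r n := by
        refine ChainIn.single hArn ?_ ?_ ?_
        · exact Finset.mem_coe.2 (Finset.mem_insert_self r Rc)
        · exact Finset.mem_coe.2 (Finset.mem_insert_of_mem hnRc)
        · rw [hdep_r, hdep_c n hnRc, hdepn]
      rcases hxn with h | h
      · rw [h]; exact hchain1
      · refine hchain1.comp ((h.congr ?_).mono ?_)
        · intro v hv; exact hdep_c v hv
        · intro v hv
          exact Finset.mem_coe.2 (Finset.mem_insert_of_mem (Finset.mem_coe.1 hv))
    refine ⟨insert r Rc, dep, fin, Finset.mem_insert_self r Rc, ?_, hdep_r, ?_, ?_, ?_, ?_, ?_⟩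
    · exact Finset.insert_subset hr (hRcU.trans (Finset.erase_subset r W))
    · intro x hx
      rcases Finset.mem_insert.1 hx with h | h
      · subst h; rw [hfin_r]; omega
      · rw [hfin_c x h]
        have := hfb x h
        omega
    · intro x hx hxr
      have hx' : x ∈ Rc := (Finset.mem_insert.1 hx).resolve_left hxr
      rw [hfin_c x hx', hfin_r]
      have := hfb x hx'
      omega
    · intro x hx
      rcases Finset.mem_insert.1 hx with h | h
      · exact Or.inl h
      · exact Or.inr (hchR x h)
    · intro x hx y hAxy hyW
      by_cases hyr : y = r
      · subst hyr; exact Finset.mem_insert_self _ _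
      · have hyW' : y ∈ W.erase r := Finset.mem_erase.2 ⟨hyr, hyW⟩
        rcases Finset.mem_insert.1 hx with h | h
        · subst h
          exact Finset.mem_insert_of_mem
            (hproc y (Finset.mem_toList.2 hyW') hAxy hyW')
        · exact Finset.mem_insert_of_mem (hcld x h y hAxy hyW')
    · intro x hx y hy hAxy
      rcases Finset.mem_insert.1 hx with hx1 | hx2 <;> rcases Finset.mem_insert.1 hy with hy1 | hy2
      · rw [hx1, hy1] at hAxy; exact absurd hAxy (hA r)
      · subst hx1
        refine Or.inr ?_
        rw [hfin_c y hy2, hfin_r]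
        have := hfb y hy2
        omega
      · subst hy1; exact Or.inl (hchR x hx2)
      · rcases hmaind x hx2 y hy2 hAxy with h | h
        · refine Or.inl ((h.congr ?_).mono ?_)
          · intro v hv; exact hdep_c v hv
          · intro v hv
            exact Finset.mem_coe.2 (Finset.mem_insert_of_mem (Finset.mem_coe.1 hv))
        · rw [hfin_c x hx2, hfin_c y hy2]; exact Or.inr h

/-- The packaged conclusion of a complete DFS of the whole white set `W`. -/
def TopSpec (A : V → V → Prop) (W : Finset V) (t₀ : ℕ) : Prop :=
  ∃ dep fin : V → ℕ,
    (∀ x ∈ W, t₀ ≤ fin x ∧ fin x < t₀ + W.card) ∧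
    ∀ x ∈ W, ∀ y ∈ W, A x y → ChainIn A (↑W) dep y x ∨ fin y < fin x

theorem exploreTop [DecidableEq V] (A : V → V → Prop) (hA : Irreflexive A) (N : ℕ) :
    ∀ W : Finset V, W.card < N → ∀ t₀ : ℕ, TopSpec A W t₀ := by
  induction N with
  | zero => intro W hW; exact absurd hW (Nat.not_lt_zero _)
  | succ N ihN =>
    intro W hW t₀
    rcases W.eq_empty_or_nonempty with hemp | ⟨r, hr⟩
    · subst hemp
      exact ⟨fun _ => 0, fun _ => 0, by simp, by simp⟩
    · obtain ⟨R, dep1, fin1, hrR, hRW, _, hbd1, _, _, hcl1, hmain1⟩ :=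
        exploreA A hA (W.card + 1) W (Nat.lt_succ_self _) r hr 0 t₀
      have hRpos : 0 < R.card := Finset.card_pos.2 ⟨r, hrR⟩
      have hcards : (W \ R).card = W.card - R.card := Finset.card_sdiff_of_subset hRW
      have hRle : R.card ≤ W.card := Finset.card_le_card hRW
      obtain ⟨dep2, fin2, hbd2, hmain2⟩ :=
        ihN (W \ R) (by omega) (t₀ + R.card)
      have hnotR : ∀ v ∈ W \ R, v ∉ R := fun v hv => (Finset.mem_sdiff.1 hv).2
      refine ⟨fun v => if v ∈ R then dep1 v else dep2 v,
        fun v => if v ∈ R then fin1 v else fin2 v, ?_, ?_⟩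
      · intro x hx
        beta_reduce
        by_cases hxR : x ∈ R
        · rw [if_pos hxR]
          have := hbd1 x hxR
          omega
        · rw [if_neg hxR]
          have := hbd2 x (Finset.mem_sdiff.2 ⟨hx, hxR⟩)
          omega
      · intro x hx y hy hAxy
        by_cases hxR : x ∈ R <;> by_cases hyR : y ∈ R
        · rcases hmain1 x hxR y hyR hAxy with h | h
          · refine Or.inl ((h.congr ?_).mono (Finset.coe_subset.2 hRW))
            intro v hv; exact if_pos hv
          · beta_reduce
            rw [if_pos hxR, if_pos hyR]; exact Or.inr h
        · exact absurd (hcl1 x hxR y hAxy hy) hyR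
        · refine Or.inr ?_
          beta_reduce
          rw [if_pos hyR, if_neg hxR]
          have h1 := hbd1 y hyR
          have h2 := hbd2 x (Finset.mem_sdiff.2 ⟨hx, hxR⟩)
          omega
        · rcases hmain2 x (Finset.mem_sdiff.2 ⟨hx, hxR⟩) y (Finset.mem_sdiff.2 ⟨hy, hyR⟩)
            hAxy with h | h
          · refine Or.inl ((h.congr ?_).mono (Finset.coe_subset.2 Finset.sdiff_subset))
            intro v hv; exact if_neg (hnotR v (Finset.mem_coe.1 hv))
          · beta_reduce
            rw [if_neg hxR, if_neg hyR]; exact Or.inr h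

theorem labels [Fintype V] (A : V → V → Prop) (hA : Irreflexive A) :
    ∃ dep fin : V → ℕ, ∀ x y : V, A x y →
      ChainIn A Set.univ dep y x ∨ fin y < fin x := by
  classical
  obtain ⟨dep, fin, _, hmain⟩ :=
    exploreTop A hA (Finset.univ.card + 1) (Finset.univ : Finset V) (Nat.lt_succ_self _) 0
  refine ⟨dep, fin, fun x y h => ?_⟩
  have := hmain x (Finset.mem_univ x) y (Finset.mem_univ y) h
  rwa [Finset.coe_univ] at this

end DFS6

/-- If `D` is strongly connected with girth `g`, `k ≥ g − 1 ≥ p ≥ 1` with `p ∣ k`, and `D`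
has no directed cycle of length congruent to `r` modulo `k` for any integer
`−p + 2 ≤ r ≤ p`, then `χ_A(D) ≤ k/p`. -/
theorem stmt_6 {V : Type*} [Fintype V] (A : V → V → Prop) (hloopless : Irreflexive A)
    (hsc : StronglyConnected A)
    (g : ℕ) (hg : HasCycleLen A g) (hgmin : ∀ ℓ, HasCycleLen A ℓ → g ≤ ℓ)
    (k p : ℕ) (hp1 : 1 ≤ p) (hpg : p ≤ g - 1) (hgk : g - 1 ≤ k) (hdvd : p ∣ k)
    (hnc : ∀ r : ℤ, -(p : ℤ) + 2 ≤ r → r ≤ (p : ℤ) →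
      ∀ ℓ, HasCycleLen A ℓ → ¬ ((ℓ : ℤ) ≡ r [ZMOD (k : ℤ)])) :
    dichromatic A ≤ k / p := by
  classical
  have hp0 : 0 < p := hp1
  have hpk : p ≤ k := le_trans hpg hgk
  have hk0 : 0 < k := lt_of_lt_of_le hp0 hpk
  obtain ⟨dep, fin, hlab⟩ := DFS6.labels A hloopless
  have hcb : ∀ v : V, (dep v % k) / p < k / p := fun v =>
    Nat.div_lt_div_of_lt_of_dvd hdvd (Nat.mod_lt _ hk0)
  set c : V → Fin (k / p) := fun v => ⟨(dep v % k) / p, hcb v⟩ with hcdef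
  have hc : ∀ i, AcyclicSet A {v | c v = i} := by
    intro i ℓ hcyc
    obtain ⟨hℓ2, u, huinj, humem, huarc⟩ := hcyc
    -- Step 1: some arc of the cycle does not decrease the finish label.
    have h1 : ∃ j : ZMod ℓ, ¬ fin (u (j + 1)) < fin (u j) := by
      by_contra hcon
      push_neg at hcon
      have key : ∀ (n : ℕ) (j : ZMod ℓ), fin (u (j + (n : ZMod ℓ))) + n ≤ fin (u j) := by
        intro n
        induction n with
        | zero => intro j; simp
        | succ n ih =>
          intro j
          have h2 := hcon (j + (n : ZMod ℓ))
          have h3 := ih j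
          have hcast : ((n + 1 : ℕ) : ZMod ℓ) = (n : ZMod ℓ) + 1 := by push_cast; ring
          have hassoc : j + ((n : ZMod ℓ) + 1) = (j + (n : ZMod ℓ)) + 1 := (add_assoc _ _ _).symm
          rw [hcast, hassoc]
          omega
      have h4 := key ℓ 0
      rw [ZMod.natCast_self, add_zero] at h4
      omega
    obtain ⟨j, hj⟩ := h1
    have harc : A (u j) (u (j + 1)) := huarc j
    have hchain := (hlab (u j) (u (j + 1)) harc).resolve_right hj
    obtain ⟨mm, hmm1, w, hw0, hwm, _, hwarc, hwdep⟩ := hchain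
    -- Step 2: the back arc closes a genuine directed cycle of length mm + 1.
    have hcyc2 : HasCycleLen A (mm + 1) := by
      refine ⟨by omega, ?_⟩
      haveI : NeZero (mm + 1) := ⟨Nat.succ_ne_zero mm⟩
      haveI : Fact (1 < mm + 1) := ⟨by omega⟩
      refine ⟨fun i : ZMod (mm + 1) => w i.val, ?_, fun _ => Set.mem_univ _, ?_⟩
      · intro i1 i2 h12
        have h12' : w i1.val = w i2.val := h12
        have hv1 : i1.val ≤ mm := Nat.lt_succ_iff.1 (ZMod.val_lt i1)
        have hv2 : i2.val ≤ mm := Nat.lt_succ_iff.1 (ZMod.val_lt i2)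
        have d1 := hwdep i1.val hv1
        have d2 := hwdep i2.val hv2
        have hvv : i1.val = i2.val := by
          rw [h12'] at d1
          omega
        exact ZMod.val_injective _ hvv
      · intro i1
        beta_reduce
        by_cases hiv : i1.val < mm
        · have hstep : (i1 + 1).val = i1.val + 1 := by
            rw [ZMod.val_add_of_lt]
            · rw [ZMod.val_one]
            · rw [ZMod.val_one]
              omega
          rw [hstep]
          exact hwarc i1.val hiv
        · have hiv' : i1.val = mm := by
            have := ZMod.val_lt i1
            omega
          have hi1 : i1 = ((mm : ℕ) : ZMod (mm + 1)) := by
            apply ZMod.val_injective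
            rw [ZMod.val_cast_of_lt (by omega), hiv']
          have hz : i1 + 1 = 0 := by
            have hns := ZMod.natCast_self (mm + 1)
            push_cast at hns
            rw [hi1]
            exact hns
          have hlast : (i1 + 1).val = 0 := by rw [hz, ZMod.val_zero]
          rw [hlast, hiv', hw0, hwm]
          exact harc
    -- Step 3: arithmetic on the residues.
    have hcx : c (u j) = i := humem j
    have hcy : c (u (j + 1)) = i := humem (j + 1)
    have hcolor : (dep (u j) % k) / p = (dep (u (j + 1)) % k) / p := by
      have : c (u j) = c (u (j + 1)) := by rw [hcx, hcy]
      exact congrArg Fin.val this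
    set b := dep (u j) % k with hbdef
    set a := dep (u (j + 1)) % k with hadef
    have hdepx : dep (u j) = dep (u (j + 1)) + mm := by
      have := hwdep mm le_rfl
      rw [hwm] at this
      exact this
    have hamod : a % p < p := Nat.mod_lt _ hp0
    have hbmod : b % p < p := Nat.mod_lt _ hp0
    have haeq : a % p + p * (a / p) = a := Nat.mod_add_div a p
    have hbeq : b % p + p * (b / p) = b := Nat.mod_add_div b p
    have hb1 := hbeq
    rw [hcolor] at hb1
    have hkey : b + a % p = a + b % p := by linarith [hb1, haeq]
    have hr1 : -(p : ℤ) + 2 ≤ (b : ℤ) - a + 1 := by omega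
    have hr2 : (b : ℤ) - a + 1 ≤ (p : ℤ) := by omega
    have hcong : ((mm + 1 : ℕ) : ℤ) ≡ (b : ℤ) - a + 1 [ZMOD (k : ℤ)] := by
      rw [Int.modEq_iff_dvd]
      refine ⟨((dep (u (j + 1)) / k : ℕ) : ℤ) - ((dep (u j) / k : ℕ) : ℤ), ?_⟩
      have e1 : (k : ℤ) * ((dep (u j) / k : ℕ) : ℤ) + b = dep (u j) := by
        exact_mod_cast Nat.div_add_mod (dep (u j)) k
      have e2 : (k : ℤ) * ((dep (u (j + 1)) / k : ℕ) : ℤ) + a = dep (u (j + 1)) := by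
        exact_mod_cast Nat.div_add_mod (dep (u (j + 1))) k
      have e3 : (dep (u j) : ℤ) = (dep (u (j + 1)) : ℤ) + mm := by exact_mod_cast hdepx
      rw [Nat.cast_add, Nat.cast_one]
      linear_combination e1 - e2 + e3
    exact hnc ((b : ℤ) - a + 1) hr1 hr2 (mm + 1) hcyc2 hcong
  exact Nat.sInf_le ⟨c, hc⟩
end

section
/- Let D be a strongly connected digraph of order n ≥ 2 with girth g. Then χ_A(D) ≤ ⌈n/(g − 1)⌉. -/
/-- If `D` is a strongly connected digraph of order `n ≥ 2` with girth `g`, then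
`χ_A(D) ≤ ⌈n/(g − 1)⌉`. -/
theorem stmt_8 {V : Type*} [Fintype V] (A : V → V → Prop) (hloopless : Irreflexive A)
    (hsc : StronglyConnected A)
    (n : ℕ) (hn : Fintype.card V = n) (hn2 : 2 ≤ n)
    (g : ℕ) (hg : HasCycleLen A g) (hgmin : ∀ ℓ, HasCycleLen A ℓ → g ≤ ℓ) :
    dichromatic A ≤ ⌈(n : ℚ) / ((g : ℚ) - 1)⌉₊ := by

  classical
  have hg2 : 2 ≤ g := hg.1
  set m : ℕ := g - 1 with hm
  have hm1 : 1 ≤ m := by omega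
  set k : ℕ := ⌈(n : ℚ) / ((g : ℚ) - 1)⌉₊ with hk
  -- n ≤ k * m
  have hgm : ((g : ℚ) - 1) = (m : ℚ) := by
    have : (1:ℕ) ≤ g := by omega
    push_cast [hm]
    rw [Nat.cast_sub this]
    push_cast
    ring
  have hnk : n ≤ k * m := by
    have h1 : (n : ℚ) / (m : ℚ) ≤ (k : ℚ) := by
      rw [hk, ← hgm]; exact Nat.le_ceil _
    have hmpos : (0:ℚ) < (m:ℚ) := by exact_mod_cast hm1
    have : (n : ℚ) ≤ (k : ℚ) * (m : ℚ) := by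
      rw [div_le_iff₀ hmpos] at h1; exact h1
    exact_mod_cast this
  -- equiv to Fin n
  have e : V ≃ Fin n := (Fintype.equivFin V).trans (finCongr hn)
  apply Nat.sInf_le
  refine ⟨fun v => ⟨(e v).val / m, ?_⟩, ?_⟩
  · have hlt : (e v).val < k * m := lt_of_lt_of_le (e v).isLt hnk
    exact Nat.div_lt_iff_lt_mul (by omega) |>.mpr (by omega)
  · intro i ℓ hcyc
    obtain ⟨hl2, u, hinj, hmem, harc⟩ := hcyc
    haveI : NeZero ℓ := ⟨by omega⟩
    -- the cycle is a cycle of D, so g ≤ ℓ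
    have hgl : g ≤ ℓ := hgmin ℓ ⟨hl2, u, hinj, fun i => Set.mem_univ _, harc⟩
    -- map into Fin m injectively
    have hdiv : ∀ j, (e (u j)).val / m = i.val := by
      intro j
      have := hmem j
      simpa using congrArg Fin.val this
    have hinj2 : Function.Injective (fun j : ZMod ℓ => (⟨(e (u j)).val % m, Nat.mod_lt _ (by omega)⟩ : Fin m)) := by
      intro a b hab
      have hmod : (e (u a)).val % m = (e (u b)).val % m := by
        have := congrArg Fin.val hab; simpa using this
      have hval : (e (u a)).val = (e (u b)).val := by
        have h1 := (Nat.div_add_mod (e (u a)).val m).symm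
        have h2 := (Nat.div_add_mod (e (u b)).val m).symm
        rw [hdiv a] at h1
        rw [hdiv b] at h2
        rw [h1, h2, hmod]
      exact hinj (e.injective (Fin.ext hval))
    have hcard : ℓ ≤ m := by
      have := Fintype.card_le_of_injective _ hinj2
      simpa [ZMod.card] using this
    omega
end

section
/- Let D be a digraph, let T be an out-branching of D rooted at r, and let f : V → ℕ be an injective labeling such that: (i) for every arc (u, v) ∈ A with f(u) < f(v), u is an ancestor of v in T; and (ii) for all vertices u, w, v, if v is a descendant of u in T and f(u) < f(w) < f(v), then w is a descendant of u in T. Then every directed cycle of D contains at least one backward arc with respect to T. -/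
/-- `T` is an out-branching of the digraph `A` rooted at `r`: a spanning subdigraph in which
`r` has in-degree 0, every other vertex has in-degree 1, and every vertex is reachable from
`r` (equivalently, for such in-degrees: the underlying undirected graph is a tree). -/
structure IsOutBranching {V : Type*} (A T : V → V → Prop) (r : V) : Prop where
  subdigraph : ∀ u v, T u v → A u v
  root_indeg_zero : ∀ u, ¬ T u r
  indeg_one : ∀ v, v ≠ r → ∃! u, T u v
  reach : ∀ v, Relation.ReflTransGen T r v

/-- `Descendant T anc des` : `des` is a descendant of `anc` in `T`
(`anc` is an ancestor of `des`). -/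
def Descendant {V : Type*} (T : V → V → Prop) (anc des : V) : Prop :=
  des ≠ anc ∧ Relation.ReflTransGen T anc des

/-- `(u,v)` is a backward arc of `A` with respect to `T`: it is an arc and `u` is a
descendant of `v` in `T`. -/
def BackwardArc {V : Type*} (A T : V → V → Prop) (u v : V) : Prop :=
  A u v ∧ Descendant T v u

/-- `T` has the DFS property: every directed cycle of `A` contains a backward arc. -/
def DFSProperty {V : Type*} (A T : V → V → Prop) : Prop :=
  ∀ (ℓ : ℕ) (u : ZMod ℓ → V), 2 ≤ ℓ → Function.Injective u →
    (∀ i, A (u i) (u (i + 1))) → ∃ i, BackwardArc A T (u i) (u (i + 1))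

/-- `TWalkLen T a b n` : there is a directed walk of length `n` from `a` to `b` in `T`.
For an out-branching `T` rooted at `r`, the `i`-th level is `{v | TWalkLen T r v i}`
(the walk from the root being the unique path `P_v`). -/
def TWalkLen {V : Type*} (T : V → V → Prop) (a b : V) (n : ℕ) : Prop :=
  ∃ w : Fin (n + 1) → V, w 0 = a ∧ w (Fin.last n) = b ∧
    ∀ j : Fin n, T (w j.castSucc) (w j.succ)

/-- Let `T` be an out-branching of `D` rooted at `r`, and `f` an injective labeling such
that (i) for every arc `(u,v)` with `f u < f v`, `u` is an ancestor of `v` in `T`, and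
(ii) whenever `v` is a descendant of `u` and `f u < f w < f v`, `w` is a descendant of
`u`. Then every directed cycle of `D` contains a backward arc with respect to `T`. -/
theorem stmt_9 {V : Type*} [Fintype V] (A T : V → V → Prop) (hloopless : Irreflexive A)
    (r : V) (hT : IsOutBranching A T r)
    (f : V → ℕ) (hfinj : Function.Injective f)
    (h1 : ∀ u v, A u v → f u < f v → Descendant T u v)
    (h2 : ∀ u w v, Descendant T u v → f u < f w → f w < f v → Descendant T u w) :
    DFSProperty A T := by
  intro ℓ u hℓ huinj harc
  haveI : NeZero ℓ := ⟨by omega⟩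
  obtain ⟨i₀, -, hmin⟩ := Finset.exists_min_image Finset.univ (fun i => f (u i))
    ⟨0, Finset.mem_univ 0⟩
  have hne : ∀ j, j ≠ i₀ → f (u i₀) < f (u j) := by
    intro j hj
    refine lt_of_le_of_ne (hmin j (Finset.mem_univ j)) fun h => ?_
    exact hj (huinj (hfinj h.symm))
  have hcastne : ∀ k : ℕ, 0 < k → k < ℓ → (k : ZMod ℓ) ≠ 0 := by
    intro k hk1 hk2 h
    have hdvd := (ZMod.natCast_eq_zero_iff k ℓ).mp h
    have := Nat.le_of_dvd hk1 hdvd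
    omega
  have key : ∀ k : ℕ, 0 < k → k < ℓ → Descendant T (u i₀) (u (i₀ + (k : ZMod ℓ))) := by
    intro k
    induction k with
    | zero => intro h; exact absurd h (lt_irrefl 0)
    | succ k ih =>
      intro _ hk
      have hidx : i₀ + ((k + 1 : ℕ) : ZMod ℓ) ≠ i₀ := by
        intro h
        apply hcastne (k + 1) (by omega) hk
        have := add_right_cancel (a := ((k + 1 : ℕ) : ZMod ℓ)) (b := i₀) (c := 0)
        simpa [add_comm] using h
      have hflt : f (u i₀) < f (u (i₀ + ((k + 1 : ℕ) : ZMod ℓ))) :=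
        hne _ hidx
      by_cases hk0 : k = 0
      · subst hk0
        have harc' := harc i₀
        have h0 : i₀ + (1 : ZMod ℓ) = i₀ + ((1 : ℕ) : ZMod ℓ) := by push_cast; ring
        rw [h0] at harc'
        exact h1 _ _ harc' hflt
      · have hdesc := ih (by omega) (by omega)
        have harc' := harc (i₀ + (k : ZMod ℓ))
        have h0 : i₀ + (k : ZMod ℓ) + 1 = i₀ + ((k + 1 : ℕ) : ZMod ℓ) := by
          push_cast; ring
        rw [h0] at harc'
        rcases lt_or_gt_of_ne (fun h => by
          have : (i₀ + (k : ZMod ℓ)) = i₀ + ((k + 1 : ℕ) : ZMod ℓ) := huinj (hfinj h)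
          have h1' : ((k : ℕ) : ZMod ℓ) = ((k + 1 : ℕ) : ZMod ℓ) := by
            exact add_left_cancel this
          have h2' : ((1 : ℕ) : ZMod ℓ) = 0 := by
            have := sub_eq_zero_of_eq h1'.symm
            push_cast at this ⊢
            linear_combination this
          exact hcastne 1 (by omega) (by omega) (by simpa using h2')) with (hlt | hgt)
        · have := h1 _ _ harc' hlt
          exact ⟨fun h => hidx (huinj h), hdesc.2.trans this.2⟩
        · exact h2 _ _ _ hdesc hflt hgt
  refine ⟨i₀ + ((ℓ - 1 : ℕ) : ZMod ℓ), harc _, ?_⟩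
  have h0 : i₀ + ((ℓ - 1 : ℕ) : ZMod ℓ) + 1 = i₀ := by
    have : ((ℓ - 1 : ℕ) : ZMod ℓ) + 1 = ((ℓ : ℕ) : ZMod ℓ) := by
      push_cast [Nat.cast_sub (by omega : 1 ≤ ℓ)]; ring
    rw [add_assoc, this, ZMod.natCast_self, add_zero]
  rw [h0]
  exact key (ℓ - 1) (by omega) (by omega)
end

section
/- Let D be a digraph and let T be an out-branching of D rooted at r with the DFS property. Let H be a subdigraph of T, and let G_H be the simple graph with vertex set V(H) in which distinct vertices u and v are adjacent if and only if (u, v) or (v, u) is a backward arc of D with respect to T. Then χ_A(D⟨V(H)⟩) ≤ χ(G_H), where D⟨V(H)⟩ is the subdigraph of D induced by V(H). In particular (taking H = T), χ_A(D) ≤ χ(G_T). -/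
lemma aux_dichrom_le {V W : Type*} (A T : V → V → Prop) (hDFS : DFSProperty A T)
    (f : W → V) (hf : Function.Injective f) (G : SimpleGraph W)
    (hG : ∀ a b, G.Adj a b ↔ BackwardArc A T (f a) (f b) ∨ BackwardArc A T (f b) (f a)) :
    (dichromatic (fun a b => A (f a) (f b)) : ℕ∞) ≤ G.chromaticNumber := by
  rw [SimpleGraph.chromaticNumber_eq_biInf]
  refine le_iInf₂ fun n hn => ?_
  obtain ⟨c⟩ := hn
  have : dichromatic (fun a b => A (f a) (f b)) ≤ n := by
    apply Nat.sInf_le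
    refine ⟨c, fun i ℓ hcyc => ?_⟩
    obtain ⟨h2, u, hinj, hmem, harc⟩ := hcyc
    obtain ⟨j, hb⟩ := hDFS ℓ (f ∘ u) h2 (hf.comp hinj) harc
    have hadj : G.Adj (u j) (u (j + 1)) := (hG _ _).2 (Or.inl hb)
    have := c.valid hadj
    exact this ((hmem j).trans (hmem (j + 1)).symm)
  exact_mod_cast this

/-- Let `T` be an out-branching of `D` rooted at `r` with the DFS property, `H` a
subdigraph of `T` with vertex set `S`, and `G_H` (resp. `G_T`) the simple graph on `S`
(resp. on all of `V`) whose edges are the pairs joined by a backward arc. Then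
`χ_A(D⟨S⟩) ≤ χ(G_H)`; in particular `χ_A(D) ≤ χ(G_T)`. -/
theorem stmt_10 {V : Type*} [Fintype V] (A T : V → V → Prop) (hloopless : Irreflexive A)
    (r : V) (hT : IsOutBranching A T r) (hDFS : DFSProperty A T)
    (S : Set V) (H : V → V → Prop)
    (hH : ∀ u v, H u v → T u v ∧ u ∈ S ∧ v ∈ S)
    (GH : SimpleGraph S)
    (hGH : ∀ a b : S, GH.Adj a b ↔ BackwardArc A T a.1 b.1 ∨ BackwardArc A T b.1 a.1)
    (GT : SimpleGraph V)
    (hGT : ∀ a b : V, GT.Adj a b ↔ BackwardArc A T a b ∨ BackwardArc A T b a) :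
    (dichromatic (fun a b : S => A a.1 b.1) : ℕ∞) ≤ GH.chromaticNumber ∧
      (dichromatic A : ℕ∞) ≤ GT.chromaticNumber := by
  constructor
  · exact aux_dichrom_le A T hDFS (Subtype.val : S → V) Subtype.val_injective GH hGH
  · exact aux_dichrom_le A T hDFS (id : V → V) Function.injective_id GT hGT
end

section
/- Let D be a digraph and let T be an out-branching of D rooted at r with the DFS property. Let x_1, …, x_k be the out-neighbors of r in T and let T_1, …, T_k be subtrees of T such that x_i ∈ V(T_i) for each i, T = T_1 ∪ … ∪ T_k, and V(T_i) ∩ V(T_j) = {r} for all i ≠ j. For each i, let G_{T_i} be the simple graph with vertex set V(T_i) in which distinct vertices u and v are adjacent if and only if (u, v) or (v, u) is a backward arc of D with respect to T. Then χ_A(D) ≤ max_{i ∈ {1,…,k}} χ(G_{T_i}). -/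
/-- Let `T` be an out-branching of `D` rooted at `r` with the DFS property, let
`x 0, …, x (k-1)` be the out-neighbors of `r` in `T`, and let `T₁, …, T_k` be subtrees of
`T` (with vertex sets `S i`, each containing `x i`, rooted at `r`) such that
`T = T₁ ∪ ⋯ ∪ T_k` and `V(Tᵢ) ∩ V(Tⱼ) = {r}` for `i ≠ j`. If `G i` is the simple graph
on `S i` whose edges are the pairs joined by a backward arc of `D` w.r.t. `T`, then
`χ_A(D) ≤ max_i χ(G i)`. -/
theorem stmt_11 {V : Type*} [Fintype V] (A T : V → V → Prop) (hloopless : Irreflexive A)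
    (r : V) (hT : IsOutBranching A T r) (hDFS : DFSProperty A T)
    (k : ℕ) (x : Fin k → V) (hxinj : Function.Injective x)
    (hxout : ∀ v, T r v ↔ ∃ i, x i = v)
    (S : Fin k → Set V) (Ti : Fin k → V → V → Prop)
    (hsub : ∀ i u v, Ti i u v → T u v ∧ u ∈ S i ∧ v ∈ S i)
    (hxS : ∀ i, x i ∈ S i) (hrS : ∀ i, r ∈ S i)
    (hcover : ∀ v, ∃ i, v ∈ S i)
    (harcs : ∀ u v, T u v ↔ ∃ i, Ti i u v)
    (hinter : ∀ i j, i ≠ j → S i ∩ S j = {r})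
    (hconn : ∀ i, ∀ v ∈ S i, Relation.ReflTransGen (Ti i) r v)
    (G : (i : Fin k) → SimpleGraph (S i))
    (hG : ∀ i, ∀ a b : S i,
      (G i).Adj a b ↔ BackwardArc A T a.1 b.1 ∨ BackwardArc A T b.1 a.1) :
    (dichromatic A : ℕ∞) ≤ ⨆ i, (G i).chromaticNumber := by
  classical
  -- k = 0 is impossible since r must lie in some S i
  rcases Nat.eq_zero_or_pos k with hk0 | hkpos
  · obtain ⟨i, _⟩ := hcover r
    exact absurd (i.2) (by omega)
  haveI : NeZero k := ⟨by omega⟩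
  -- choose an index attaining the maximal chromatic number
  obtain ⟨i₀, hi₀⟩ := Finite.exists_max (fun i => (G i).chromaticNumber)
  haveI : ∀ i : Fin k, Fintype (S i) := fun i => Fintype.ofFinite _
  have hfin : ∀ i : Fin k, (G i).chromaticNumber ≠ ⊤ := fun i =>
    ((G i).chromaticNumber_ne_top_iff_exists).mpr ⟨_, (G i).colorable_of_fintype⟩
  set m : ℕ := ((G i₀).chromaticNumber).toNat with hm
  have hmcast : (m : ℕ∞) = (G i₀).chromaticNumber := ENat.coe_toNat (hfin i₀)
  -- every G i is colorable with m colors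
  have hcol : ∀ i, (G i).Colorable m := fun i => by
    rw [← SimpleGraph.chromaticNumber_le_iff_colorable, hmcast]
    exact hi₀ i
  -- the colorings, normalized so that r gets color determined below
  have hm0 : m ≠ 0 := by
    intro h
    have C := (hcol i₀).some
    have := C ⟨r, hrS i₀⟩
    rw [h] at this
    exact this.elim0
  haveI : NeZero m := ⟨hm0⟩
  let C : (i : Fin k) → (G i).Coloring (Fin m) := fun i => (hcol i).some
  let f : (i : Fin k) → S i → Fin m := fun i v => Equiv.swap (C i ⟨r, hrS i⟩) 0 (C i v)
  have hf_r : ∀ i, f i ⟨r, hrS i⟩ = 0 := fun i => Equiv.swap_apply_left _ _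
  have hf_valid : ∀ i (a b : S i), (G i).Adj a b → f i a ≠ f i b := by
    intro i a b hab h
    exact (C i).valid hab ((Equiv.swap _ _).injective h)
  -- membership uniqueness away from r
  have huniq : ∀ {v : V} {i j : Fin k}, v ≠ r → v ∈ S i → v ∈ S j → i = j := by
    intro v i j hv hi hj
    by_contra hne
    exact hv (by have := hinter i j hne ▸ Set.mem_inter hi hj; exact this)
  -- r is never the target of a T-path of positive length, in particular never a proper descendant
  have hnotr : ∀ {b : V}, b ≠ r → Relation.ReflTransGen T b r → False := by
    intro b hb h
    rcases Relation.ReflTransGen.cases_tail h with h1 | ⟨c, _, hc⟩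
    · exact hb h1.symm
    · exact hT.root_indeg_zero c hc
  -- descendants of a non-root vertex stay in the same subtree
  have hsame : ∀ {b a : V}, Relation.ReflTransGen T b a → ∃ j, a ∈ S j ∧ b ∈ S j := by
    intro b a h
    induction h with
    | refl => obtain ⟨j, hj⟩ := hcover b; exact ⟨j, hj, hj⟩
    | @tail c a' h1 h2 ih =>
      obtain ⟨j, hcj, hbj⟩ := ih
      obtain ⟨j', hj'⟩ := (harcs c a').mp h2
      have hcj' : c ∈ S j' := (hsub j' c a' hj').2.1
      have haj' : a' ∈ S j' := (hsub j' c a' hj').2.2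
      by_cases hcr : c = r
      · by_cases hbr : b = r
        · exact ⟨j', haj', hbr ▸ hrS j'⟩
        · exact (hnotr hbr (hcr ▸ h1)).elim
      · have : j = j' := huniq hcr hcj hcj'
        exact ⟨j', haj', this ▸ hbj⟩
  -- define the global coloring
  let idx : V → Fin k := fun v => (hcover v).choose
  have hidx : ∀ v, v ∈ S (idx v) := fun v => (hcover v).choose_spec
  let c : V → Fin m := fun v => if hv : v = r then 0 else f (idx v) ⟨v, hidx v⟩
  have hc_mem : ∀ {v : V} {j : Fin k} (hvj : v ∈ S j), c v = f j ⟨v, hvj⟩ := by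
    intro v j hvj
    by_cases hv : v = r
    · have h0 : c v = 0 := dif_pos hv
      have h1 : (⟨v, hvj⟩ : S j) = ⟨r, hrS j⟩ := Subtype.ext hv
      rw [h0, h1, hf_r j]
    · have h1 : c v = f (idx v) ⟨v, hidx v⟩ := dif_neg hv
      have hj : idx v = j := huniq hv (hidx v) hvj
      rw [h1]
      subst hj
      rfl
  -- the coloring witnesses dichromatic A ≤ m
  have hdle : dichromatic A ≤ m := by
    apply Nat.sInf_le
    refine ⟨c, fun col ℓ hcyc => ?_⟩
    obtain ⟨hℓ, u, hinj, hmem, harc⟩ := hcyc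
    obtain ⟨i, ha, hdesc⟩ := hDFS ℓ u hℓ hinj harc
    set a := u i
    set b := u (i + 1)
    obtain ⟨hab, hba⟩ := hdesc
    obtain ⟨j, haj, hbj⟩ := hsame hba
    have hadj : (G j).Adj ⟨a, haj⟩ ⟨b, hbj⟩ := by
      rw [hG]
      exact Or.inl ⟨ha, hab, hba⟩
    have h1 : c a = col := hmem i
    have h2 : c b = col := hmem (i + 1)
    exact hf_valid j ⟨a, haj⟩ ⟨b, hbj⟩ hadj
      (by rw [← hc_mem haj, ← hc_mem hbj, h1, h2])
  calc (dichromatic A : ℕ∞) ≤ (m : ℕ∞) := by exact_mod_cast hdle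
    _ = (G i₀).chromaticNumber := hmcast
    _ ≤ ⨆ i, (G i).chromaticNumber := le_iSup (fun i => (G i).chromaticNumber) i₀
end

section
/- Let D be a digraph and let T be an out-branching of D rooted at r with the DFS property, of length t, with levels V_0, V_1, …, V_t. Let G^D be the simple graph with vertex set {0, 1, …, t} in which i and j with i > j are adjacent if and only if there is a backward arc (u, v) ∈ A with u ∈ V_i and v ∈ V_j. If c′ is a proper coloring of G^D, then the coloring c of D defined by c(v) = c′(i) whenever v ∈ V_i has all color classes acyclic; in particular, χ_A(D) ≤ χ(G^D). -/
/-!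
An arc joining two vertices of the same colour class is never backward, because any backward
arc `(u, v)` with `u ∈ V_i`, `v ∈ V_j` makes `i` and `j` adjacent in `G`, and adjacent levels
get different colours. By the DFS property every directed cycle contains a backward arc, so no
directed cycle lies inside a colour class. Applied to an optimal colouring of `G`, this gives a
colouring of `D` by `χ(G)` acyclic classes.
-/

section Digraph

variable {V : Type*} {A T : V → V → Prop}

theorem TWalkLen.snoc {a b c : V} {n : ℕ} (hw : TWalkLen T a c n) (hcb : T c b) :
    TWalkLen T a b (n + 1) := by
  obtain ⟨w, h0, hl, hs⟩ := hw
  refine ⟨Fin.snoc w b, ?_, Fin.snoc_last _ _, Fin.lastCases ?_ fun j => ?_⟩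
  · rw [← Fin.castSucc_zero, Fin.snoc_castSucc, h0]
  · simpa [hl] using hcb
  · rw [Fin.succ_castSucc, Fin.snoc_castSucc, Fin.snoc_castSucc]
    exact hs j

theorem exists_twalkLen_of_reflTransGen {a b : V} (h : Relation.ReflTransGen T a b) :
    ∃ n, TWalkLen T a b n := by
  induction h with
  | refl => exact ⟨0, fun _ => a, rfl, rfl, Fin.elim0⟩
  | tail _ hcb ih =>
    obtain ⟨n, hw⟩ := ih
    exact ⟨n + 1, hw.snoc hcb⟩

theorem AcyclicSet.mono {U S : Set V} (hS : AcyclicSet A S) (hUS : U ⊆ S) : AcyclicSet A U :=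
  fun ℓ ⟨h2, u, hinj, hmem, harc⟩ => hS ℓ ⟨h2, u, hinj, fun i => hUS (hmem i), harc⟩

theorem DFSProperty.acyclicSet_of_forall_not_backwardArc (hDFS : DFSProperty A T) {U : Set V}
    (hU : ∀ u ∈ U, ∀ v ∈ U, ¬ BackwardArc A T u v) : AcyclicSet A U := by
  rintro ℓ ⟨h2, u, hinj, hmem, harc⟩
  obtain ⟨k, hback⟩ := hDFS ℓ u h2 hinj harc
  exact hU _ (hmem k) _ (hmem (k + 1)) hback

theorem dichromatic_le_of_acyclic_coloring {k : ℕ} (c : V → Fin k)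
    (hc : ∀ i, AcyclicSet A {v | c v = i}) : dichromatic A ≤ k :=
  Nat.sInf_le ⟨c, hc⟩

end Digraph

theorem stmt_13_general {V : Type*} (A T : V → V → Prop)
    (r : V) (hT : IsOutBranching A T r) (hDFS : DFSProperty A T)
    (t : ℕ)
    (htmax : ∀ v i, TWalkLen T r v i → i ≤ t)
    (G : SimpleGraph (Fin (t + 1)))
    (hG : ∀ i j : Fin (t + 1), G.Adj i j ↔
      ∃ u v, BackwardArc A T u v ∧
        ((TWalkLen T r u i.1 ∧ TWalkLen T r v j.1) ∨
          (TWalkLen T r u j.1 ∧ TWalkLen T r v i.1))) :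
    (∀ c' : Fin (t + 1) → ℕ, (∀ i j, G.Adj i j → c' i ≠ c' j) →
      ∀ n : ℕ, AcyclicSet A {v | ∃ i : Fin (t + 1), TWalkLen T r v i.1 ∧ c' i = n}) ∧
      (dichromatic A : ℕ∞) ≤ G.chromaticNumber := by
  have hclass : ∀ c' : Fin (t + 1) → ℕ, (∀ i j, G.Adj i j → c' i ≠ c' j) →
      ∀ n : ℕ, AcyclicSet A {v | ∃ i : Fin (t + 1), TWalkLen T r v i.1 ∧ c' i = n} := by
    intro c' hc' n
    refine hDFS.acyclicSet_of_forall_not_backwardArc ?_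
    rintro u ⟨i, hu, rfl⟩ v ⟨j, hv, hij⟩ hback
    exact hc' i j ((hG i j).mpr ⟨u, v, hback, .inl ⟨hu, hv⟩⟩) hij.symm
  have hlevel : ∀ v, ∃ i : Fin (t + 1), TWalkLen T r v i.1 := fun v =>
    let ⟨m, hm⟩ := exists_twalkLen_of_reflTransGen (hT.reach v)
    ⟨⟨m, Nat.lt_succ_of_le (htmax v m hm)⟩, hm⟩
  choose level hlevel using hlevel
  refine ⟨hclass, SimpleGraph.le_chromaticNumber_iff_coloring.mpr fun m C => ?_⟩
  refine Nat.cast_le.mpr (dichromatic_le_of_acyclic_coloring (fun v => C (level v)) fun k => ?_)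
  refine (hclass (fun i => C i) (fun i j hij h => C.valid hij (Fin.val_injective h)) k).mono ?_
  rintro v rfl
  exact ⟨level v, hlevel v, rfl⟩

/-- Let `T` be an out-branching of `D` rooted at `r` with the DFS property, of length `t`,
with levels `V_i`, and let `G` be the simple graph on `{0, …, t}` in which two levels are
adjacent iff some backward arc joins them. For every proper coloring `c'` of `G`, the
induced coloring of `D` (giving `v ∈ V_i` the color `c' i`) has all color classes
acyclic; in particular `χ_A(D) ≤ χ(G)`. -/
theorem stmt_13 {V : Type*} [Fintype V] (A T : V → V → Prop) (hloopless : Irreflexive A)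
    (r : V) (hT : IsOutBranching A T r) (hDFS : DFSProperty A T)
    (t : ℕ) (htne : ∃ v, TWalkLen T r v t)
    (htmax : ∀ v i, TWalkLen T r v i → i ≤ t)
    (G : SimpleGraph (Fin (t + 1)))
    (hG : ∀ i j : Fin (t + 1), G.Adj i j ↔
      ∃ u v, BackwardArc A T u v ∧
        ((TWalkLen T r u i.1 ∧ TWalkLen T r v j.1) ∨
          (TWalkLen T r u j.1 ∧ TWalkLen T r v i.1))) :
    (∀ c' : Fin (t + 1) → ℕ, (∀ i j, G.Adj i j → c' i ≠ c' j) →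
      ∀ n : ℕ, AcyclicSet A {v | ∃ i : Fin (t + 1), TWalkLen T r v i.1 ∧ c' i = n}) ∧
      (dichromatic A : ℕ∞) ≤ G.chromaticNumber :=
  stmt_13_general A T r hT hDFS t htmax G hG
end

section
/- Let k ≥ 2 be an integer and let D be a digraph with no directed cycle of length congruent to 1 modulo k. Let T be an out-branching of D rooted at r with the DFS property, of length t, with levels V_0, V_1, …, V_t. Then the sets U_s = ⋃_{0 ≤ i ≤ t, i ≡ s (mod k)} V_i, for s ∈ {0, 1, …, k − 1}, form a partition of V into acyclic sets; in particular, χ_A(D) ≤ k. -/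
def NWalk {V : Type*} (T : V → V → Prop) (a b : V) (n : ℕ) : Prop :=
  ∃ f : ℕ → V, f 0 = a ∧ f n = b ∧ ∀ j < n, T (f j) (f (j + 1))

lemma twalk_iff_nwalk {V : Type*} (T : V → V → Prop) (a b : V) (n : ℕ) :
    TWalkLen T a b n ↔ NWalk T a b n := by
  constructor
  · rintro ⟨w, h0, hl, hs⟩
    refine ⟨fun j => if h : j ≤ n then w ⟨j, by omega⟩ else b, ?_, ?_, ?_⟩
    · beta_reduce
      rw [dif_pos (Nat.zero_le n)]; exact h0
    · beta_reduce
      rw [dif_pos (le_refl n)]; exact hl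
    · intro j hj
      beta_reduce
      rw [dif_pos (by omega : j ≤ n), dif_pos (by omega : j + 1 ≤ n)]
      exact hs ⟨j, hj⟩
  · rintro ⟨f, h0, hn, hs⟩
    refine ⟨fun i => f i.val, h0, by simpa using hn, fun j => ?_⟩
    simpa using hs j.val j.isLt

lemma nwalk_trans {V : Type*} {T : V → V → Prop} {a b c : V} {m n : ℕ}
    (h1 : NWalk T a b m) (h2 : NWalk T b c n) : NWalk T a c (m + n) := by
  obtain ⟨f, hf0, hfm, hfs⟩ := h1
  obtain ⟨g, hg0, hgn, hgs⟩ := h2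
  refine ⟨fun j => if j < m then f j else g (j - m), ?_, ?_, ?_⟩
  · by_cases h : 0 < m
    · simp only [if_pos h]; exact hf0
    · have hm : m = 0 := by omega
      subst hm
      simp only [Nat.lt_irrefl, if_false, Nat.sub_zero]
      rw [hg0, ← hfm]; exact hf0
  · simp only [if_neg (by omega : ¬ m + n < m)]
    rw [Nat.add_sub_cancel_left]; exact hgn
  · intro j hj
    by_cases h : j < m
    · by_cases h' : j + 1 < m
      · simp only [if_pos h, if_pos h']; exact hfs j h
      · have hj1 : j + 1 = m := by omega
        simp only [if_pos h, if_neg h']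
        have : g (j + 1 - m) = f (j + 1) := by
          rw [hj1, Nat.sub_self, hg0, hfm]
        rw [this]; exact hfs j h
    · simp only [if_neg h, if_neg (by omega : ¬ j + 1 < m)]
      have : j + 1 - m = (j - m) + 1 := by omega
      rw [this]; exact hgs (j - m) (by omega)

lemma nwalk_refl {V : Type*} (T : V → V → Prop) (a : V) : NWalk T a a 0 :=
  ⟨fun _ => a, rfl, rfl, by omega⟩

lemma nwalk_single {V : Type*} {T : V → V → Prop} {a b : V} (h : T a b) : NWalk T a b 1 :=
  ⟨fun j => if j = 0 then a else b, if_pos rfl, if_neg one_ne_zero, by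
    intro j hj
    interval_cases j
    simpa using h⟩

lemma nwalk_of_rtg {V : Type*} {T : V → V → Prop} {a b : V}
    (h : Relation.ReflTransGen T a b) : ∃ n, NWalk T a b n := by
  induction h with
  | refl => exact ⟨0, nwalk_refl T a⟩
  | tail _ hbc ih =>
    obtain ⟨n, hn⟩ := ih
    exact ⟨n + 1, nwalk_trans hn (nwalk_single hbc)⟩

lemma level_unique {V : Type*} {T : V → V → Prop} {r : V}
    (hroot : ∀ u, ¬ T u r) (huniq : ∀ v, v ≠ r → ∃! u, T u v) :
    ∀ i v j, NWalk T r v i → NWalk T r v j → i = j := by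
  intro i
  induction i with
  | zero =>
    intro v j h0 hj
    obtain ⟨f, hf0, hfn, _⟩ := h0
    have hv : v = r := by rw [← hfn, hf0]
    subst hv
    rcases j with _ | m
    · rfl
    · obtain ⟨g, hg0, hgn, hgs⟩ := hj
      exact absurd (hgn ▸ hgs m (by omega)) (hroot _)
  | succ n ih =>
    intro v j hi hj
    obtain ⟨f, hf0, hfn, hfs⟩ := hi
    have hstep : T (f n) v := hfn ▸ hfs n (by omega)
    have hv : v ≠ r := fun h => hroot (f n) (h ▸ hstep)
    rcases j with _ | m
    · obtain ⟨g, hg0, hgn, _⟩ := hj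
      exact absurd (by rw [← hgn, hg0]) hv
    · obtain ⟨g, hg0, hgn, hgs⟩ := hj
      have hstep' : T (g m) v := hgn ▸ hgs m (by omega)
      obtain ⟨u, -, huu⟩ := huniq v hv
      have he : f n = g m := (huu _ hstep).trans (huu _ hstep').symm
      have h1 : NWalk T r (f n) n := ⟨f, hf0, rfl, fun j hj => hfs j (by omega)⟩
      have h2 : NWalk T r (g m) m := ⟨g, hg0, rfl, fun j hj => hgs j (by omega)⟩
      rw [ih (f n) m h1 (he ▸ h2)]

/-- Let `k ≥ 2` and let `D` have no directed cycle of length `≡ 1 (mod k)`. Let `T` be an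
out-branching of `D` rooted at `r` with the DFS property, of length `t`, with levels
`V_i`. Then the sets `U s = ⋃_{i ≡ s (mod k)} V_i`, `s ∈ {0, …, k−1}`, form a partition
of `V` into acyclic sets; in particular `χ_A(D) ≤ k`. -/
theorem stmt_15 {V : Type*} [Fintype V] (A T : V → V → Prop) (hloopless : Irreflexive A)
    (k : ℕ) (hk : 2 ≤ k)
    (hnc : ∀ ℓ, HasCycleLen A ℓ → ¬ (ℓ ≡ 1 [MOD k]))
    (r : V) (hT : IsOutBranching A T r) (hDFS : DFSProperty A T)
    (t : ℕ) (htne : ∃ v, TWalkLen T r v t)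
    (htmax : ∀ v i, TWalkLen T r v i → i ≤ t)
    (U : ℕ → Set V)
    (hU : ∀ s, U s = {v | ∃ i, TWalkLen T r v i ∧ i % k = s}) :
    (∀ v, ∃ s, s < k ∧ v ∈ U s) ∧
      (∀ s s' : ℕ, s < k → s' < k → s ≠ s' → U s ∩ U s' = ∅) ∧
      (∀ s, s < k → AcyclicSet A (U s)) ∧
      dichromatic A ≤ k := by
  classical
  have lu := level_unique hT.root_indeg_zero hT.indeg_one
  have lvlE : ∀ v : V, ∃ i, NWalk T r v i := fun v => nwalk_of_rtg (hT.reach v)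
  have hac : ∀ s, AcyclicSet A (U s) := by
    intro s ℓ hcy
    obtain ⟨hℓ2, u, hinj, hmem, harc⟩ := hcy
    obtain ⟨i, hA, hne, hrtg⟩ := hDFS ℓ u hℓ2 hinj harc
    set x := u i with hx
    set v := u (i + 1) with hv
    have hxU : x ∈ U s := hmem i
    have hvU : v ∈ U s := hmem (i + 1)
    rw [hU s] at hxU hvU
    obtain ⟨b, hbw, hbs⟩ := hxU
    obtain ⟨a, haw, has⟩ := hvU
    rw [twalk_iff_nwalk] at hbw haw
    obtain ⟨m, hm⟩ := nwalk_of_rtg hrtg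
    have hm1 : 1 ≤ m := by
      rcases Nat.eq_zero_or_pos m with h | h
      · subst h
        obtain ⟨f, hf0, hfm, _⟩ := hm
        exact absurd (by rw [← hfm, hf0] : x = v) hne
      · exact h
    have hbam : b = a + m := lu b x (a + m) hbw (nwalk_trans haw hm)
    have hdvd : k ∣ m := by
      have hmod : a ≡ a + m [MOD k] := by
        show a % k = (a + m) % k
        rw [← hbam, hbs, has]
      have := (Nat.modEq_iff_dvd' (Nat.le_add_right a m)).mp hmod
      simpa using this
    obtain ⟨f, hf0, hfm, hfs⟩ := hm
    have hlev : ∀ j ≤ m, NWalk T r (f j) (a + j) := fun j hj =>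
      nwalk_trans haw ⟨f, hf0, rfl, fun p hp => hfs p (by omega)⟩
    have hfin : ∀ p ≤ m, ∀ q ≤ m, f p = f q → p = q := by
      intro p hp q hq hpq
      have := lu (a + p) (f p) (a + q) (hlev p hp) (hpq ▸ hlev q hq)
      omega
    have hcyc : HasCycleLen A (m + 1) := by
      refine ⟨by omega, fun j : ZMod (m + 1) => f (ZMod.val j), ?_, fun _ => trivial, ?_⟩
      · intro p q hpq
        have hp := ZMod.val_lt p
        have hq := ZMod.val_lt q
        exact ZMod.val_injective _ (hfin (ZMod.val p) (by omega) (ZMod.val q) (by omega) hpq)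
      · intro j
        have hval : ZMod.val (j + 1) = (ZMod.val j + 1) % (m + 1) := by
          rw [ZMod.val_add, ZMod.val_one_eq_one_mod,
            Nat.mod_eq_of_lt (show 1 < m + 1 by omega)]
        by_cases hjm : ZMod.val j = m
        · have h0 : ZMod.val (j + 1) = 0 := by rw [hval, hjm, Nat.mod_self]
          show A (f (ZMod.val j)) (f (ZMod.val (j + 1)))
          rw [hjm, h0, hfm, hf0]
          exact hA
        · have hjlt : ZMod.val j < m := by have := ZMod.val_lt j; omega
          have h1 : ZMod.val (j + 1) = ZMod.val j + 1 := by
            rw [hval, Nat.mod_eq_of_lt (by omega)]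
          show A (f (ZMod.val j)) (f (ZMod.val (j + 1)))
          rw [h1]
          exact hT.subdigraph _ _ (hfs (ZMod.val j) hjlt)
    apply hnc (m + 1) hcyc
    obtain ⟨q, hq⟩ := hdvd
    show (m + 1) % k = 1 % k
    rw [hq]
    exact Nat.mul_add_mod k q 1
  refine ⟨?_, ?_, fun s _ => hac s, ?_⟩
  · intro v
    obtain ⟨i, hi⟩ := lvlE v
    exact ⟨i % k, Nat.mod_lt _ (by omega),
      by rw [hU]; exact ⟨i, (twalk_iff_nwalk _ _ _ _).mpr hi, rfl⟩⟩
  · intro s s' _ _ hss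
    ext v
    simp only [Set.mem_inter_iff, Set.mem_empty_iff_false, iff_false]
    rintro ⟨h1, h2⟩
    rw [hU] at h1 h2
    obtain ⟨i, hiw, his⟩ := h1
    obtain ⟨j, hjw, hjs⟩ := h2
    rw [twalk_iff_nwalk] at hiw hjw
    exact hss (by rw [← his, ← hjs, lu i v j hiw hjw])
  · apply Nat.sInf_le
    refine ⟨fun v => ⟨(Classical.choose (lvlE v)) % k, Nat.mod_lt _ (by omega)⟩, ?_⟩
    intro i ℓ hcy
    apply hac i.val ℓ
    obtain ⟨h2, u, hinj, hmem, harc⟩ := hcy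
    refine ⟨h2, u, hinj, ?_, harc⟩
    intro j
    have hm : (⟨(Classical.choose (lvlE (u j))) % k, Nat.mod_lt _ (by omega)⟩ : Fin k) = i :=
      hmem j
    rw [hU]
    exact ⟨Classical.choose (lvlE (u j)),
      (twalk_iff_nwalk _ _ _ _).mpr (Classical.choose_spec (lvlE (u j))),
      congrArg Fin.val hm⟩
end

section
/- Let D be a digraph with at least one directed cycle and girth g, and let T be an out-branching of D rooted at r with the DFS property, of length t, with levels V_0, V_1, …, V_t. Let k = ⌈(t + 1)/(g − 1)⌉ and, for each h ∈ {0, 1, …, k − 1}, let U_h = ⋃_{j=0}^{g−2} V_{h(g−1)+j}, where V_m = ∅ whenever m > t. Then U_0, …, U_{k−1} form a partition of V into acyclic sets; moreover, there is no backward arc with both endpoints in the same set U_h. -/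
lemma twalk_zero {V : Type*} (T : V → V → Prop) (a b : V) : TWalkLen T a b 0 ↔ a = b := by
  constructor
  · rintro ⟨w, h0, hl, -⟩; rw [← h0, ← hl]; rfl
  · rintro rfl; exact ⟨fun _ => a, rfl, rfl, fun j => j.elim0⟩

lemma twalk_succ {V : Type*} (T : V → V → Prop) (a b : V) (n : ℕ) :
    TWalkLen T a b (n + 1) ↔ ∃ c, TWalkLen T a c n ∧ T c b := by
  constructor
  · rintro ⟨w, h0, hl, hs⟩
    refine ⟨w (Fin.last n).castSucc, ⟨fun i => w i.castSucc, by simp [h0], rfl, ?_⟩, ?_⟩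
    · intro j
      have := hs j.castSucc
      rwa [Fin.succ_castSucc] at this
    · have := hs (Fin.last n)
      rwa [Fin.succ_last, hl] at this
  · rintro ⟨c, ⟨w, h0, hl, hs⟩, hcb⟩
    refine ⟨Fin.snoc w b, by rw [show (0 : Fin (n + 1 + 1)) = Fin.castSucc 0 by simp, Fin.snoc_castSucc, h0], by simp, ?_⟩
    intro j
    rcases eq_or_ne j (Fin.last n) with rfl | hne
    · rw [Fin.succ_last]
      simp [Fin.snoc_castSucc, Fin.snoc_last, hl, hcb]
    · obtain ⟨j', rfl⟩ := Fin.exists_castSucc_eq.2 hne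
      rw [Fin.succ_castSucc]
      simp only [Fin.snoc_castSucc]
      exact hs j'

lemma twalk_trans {V : Type*} (T : V → V → Prop) {a b c : V} {m n : ℕ}
    (h1 : TWalkLen T a b m) (h2 : TWalkLen T b c n) : TWalkLen T a c (m + n) := by
  induction n generalizing c with
  | zero => rwa [(twalk_zero T b c).1 h2] at h1
  | succ n ih =>
    obtain ⟨d, hd, hdc⟩ := (twalk_succ T b c n).1 h2
    exact (twalk_succ T a c (m + n)).2 ⟨d, ih hd, hdc⟩

lemma twalk_one {V : Type*} (T : V → V → Prop) {a b : V} (h : T a b) : TWalkLen T a b 1 :=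
  (twalk_succ T a b 0).2 ⟨a, (twalk_zero T a a).2 rfl, h⟩

lemma rtg_walk {V : Type*} (T : V → V → Prop) {a b : V} (h : Relation.ReflTransGen T a b) :
    ∃ n, TWalkLen T a b n := by
  induction h with
  | refl => exact ⟨0, (twalk_zero T a a).2 rfl⟩
  | tail _ hstep ih =>
    obtain ⟨n, hn⟩ := ih
    exact ⟨n + 1, (twalk_succ T a _ n).2 ⟨_, hn, hstep⟩⟩

lemma walklen_unique {V : Type*} (T : V → V → Prop) (r : V)
    (hroot : ∀ u, ¬ T u r) (huniq : ∀ v, v ≠ r → ∃! u, T u v) :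
    ∀ m n v, TWalkLen T r v m → TWalkLen T r v n → m = n := by
  intro m
  induction m with
  | zero =>
    intro n v h1 h2
    obtain rfl := (twalk_zero T r v).1 h1
    cases n with
    | zero => rfl
    | succ n =>
      obtain ⟨c, -, hc⟩ := (twalk_succ T r r n).1 h2
      exact absurd hc (hroot c)
  | succ m ih =>
    intro n v h1 h2
    obtain ⟨c, hc, hcv⟩ := (twalk_succ T r v m).1 h1
    cases n with
    | zero =>
      obtain rfl := ((twalk_zero T r v).1 h2).symm
      exact absurd hcv (hroot c)
    | succ n =>
      obtain ⟨c', hc', hcv'⟩ := (twalk_succ T r v n).1 h2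
      have hvr : v ≠ r := fun hv => hroot c (hv ▸ hcv)
      obtain ⟨u, -, hu⟩ := huniq v hvr
      rw [hu c hcv, ← hu c' hcv'] at hc
      rw [ih n c' hc hc']

/-- Let `D` have at least one directed cycle and girth `g`, and let `T` be an
out-branching of `D` rooted at `r` with the DFS property, of length `t`, with levels
`V_i`. Let `k = ⌈(t + 1)/(g − 1)⌉` and `U h = ⋃_{j=0}^{g−2} V_{h(g−1)+j}` for
`h ∈ {0, …, k−1}`. Then `U 0, …, U (k−1)` form a partition of `V` into acyclic sets;
moreover no backward arc has both endpoints in the same `U h`. -/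
theorem stmt_17 {V : Type*} [Fintype V] (A T : V → V → Prop) (hloopless : Irreflexive A)
    (g : ℕ) (hg : HasCycleLen A g) (hgmin : ∀ ℓ, HasCycleLen A ℓ → g ≤ ℓ)
    (r : V) (hT : IsOutBranching A T r) (hDFS : DFSProperty A T)
    (t : ℕ) (htne : ∃ v, TWalkLen T r v t)
    (htmax : ∀ v i, TWalkLen T r v i → i ≤ t)
    (k : ℕ) (hk : k = ⌈((t : ℚ) + 1) / ((g : ℚ) - 1)⌉₊)
    (U : ℕ → Set V)
    (hU : ∀ h, U h = {v | ∃ i, TWalkLen T r v i ∧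
      h * (g - 1) ≤ i ∧ i ≤ h * (g - 1) + (g - 2)}) :
    (∀ v, ∃ h, h < k ∧ v ∈ U h) ∧
      (∀ h h' : ℕ, h < k → h' < k → h ≠ h' → U h ∩ U h' = ∅) ∧
      (∀ h, h < k → AcyclicSet A (U h)) ∧
      (∀ h, h < k → ∀ u v, BackwardArc A T u v → u ∈ U h → v ∈ U h → False) := by
  have hg2 : 2 ≤ g := hg.1
  -- depth function
  have hex : ∀ v, ∃ n, TWalkLen T r v n := fun v => rtg_walk T (hT.reach v)
  choose d hd using hex
  have huniq : ∀ m v, TWalkLen T r v m → m = d v := fun m v hm =>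
    walklen_unique T r hT.root_indeg_zero hT.indeg_one m (d v) v hm (hd v)
  have dstep : ∀ a b, T a b → d b = d a + 1 := fun a b hab =>
    (huniq (d a + 1) b (twalk_trans T (hd a) (twalk_one T hab))).symm
  have hdwalk : ∀ (n : ℕ) (w : Fin (n + 1) → V), (∀ j : Fin n, T (w j.castSucc) (w j.succ)) →
      ∀ j : Fin (n + 1), d (w j) = d (w 0) + j.val := by
    intro n w hw j
    induction j using Fin.induction with
    | zero => simp
    | succ j ih =>
      have h1 := dstep _ _ (hw j)
      have h2 : (j.castSucc : Fin (n + 1)).val = (j : Fin n).val := Fin.coe_castSucc j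
      rw [h1, ih]
      simp only [Fin.val_succ]
      omega
  -- membership in U h determines depth range
  have hmemU : ∀ h v, v ∈ U h → h * (g - 1) ≤ d v ∧ d v ≤ h * (g - 1) + (g - 2) := by
    intro h v hv
    rw [hU h] at hv
    obtain ⟨i, hwi, h1, h2⟩ := hv
    obtain rfl := huniq i v hwi
    exact ⟨h1, h2⟩
  -- core: no backward arc within a single U h
  have hback : ∀ (h : ℕ) (u v : V), BackwardArc A T u v → u ∈ U h → v ∈ U h → False := by
    intro h u v hb hu hv
    obtain ⟨hav, hne, hreach⟩ := hb
    obtain ⟨hu1, hu2⟩ := hmemU h u hu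
    obtain ⟨hv1, hv2⟩ := hmemU h v hv
    obtain ⟨n, hwn⟩ := rtg_walk T hreach
    have hdu : d v + n = d u := huniq (d v + n) u (twalk_trans T (hd v) hwn)
    have hn1 : 1 ≤ n := by
      rcases Nat.eq_zero_or_pos n with rfl | h'
      · exact absurd ((twalk_zero T v u).1 hwn).symm hne
      · exact h'
    obtain ⟨w, hw0, hwl, hws⟩ := hwn
    have hwc : ∀ (a b : ℕ) (ha : a < n + 1) (hb : b < n + 1), a = b →
        w ⟨a, ha⟩ = w ⟨b, hb⟩ := by
      intro a b ha hb hab; subst hab; rfl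
    set c : ZMod (n + 1) → V := fun i => w ⟨i.val, ZMod.val_lt i⟩ with hc
    have hval1 : (1 : ZMod (n + 1)).val = 1 := by
      rw [ZMod.val_one_eq_one_mod, Nat.mod_eq_of_lt (by omega)]
    have hinj : Function.Injective c := by
      intro i j hij
      have hi := hdwalk n w hws ⟨i.val, ZMod.val_lt i⟩
      have hj := hdwalk n w hws ⟨j.val, ZMod.val_lt j⟩
      have : i.val = j.val := by
        simp only [hc] at hij
        rw [hij] at hi
        simp only [hj] at hi
        omega
      exact Fin.ext this
    have harc : ∀ i, A (c i) (c (i + 1)) := by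
      intro i
      have hiv : i.val < n + 1 := ZMod.val_lt i
      have hadd : (i + 1).val = (i.val + 1) % (n + 1) := by
        rw [ZMod.val_add, hval1]
      by_cases hcase : i.val < n
      · have h1 : (i + 1).val = i.val + 1 := by rw [hadd, Nat.mod_eq_of_lt (by omega)]
        have heq : c (i + 1) = w ⟨i.val + 1, by omega⟩ := by
          simp only [hc]
          exact hwc _ _ _ _ h1
        rw [heq]
        exact hT.subdigraph _ _ (hws ⟨i.val, hcase⟩)
      · have hival : i.val = n := by omega
        have h1 : (i + 1).val = 0 := by rw [hadd, hival]; simp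
        have heq1 : c i = u := by
          simp only [hc]
          rw [hwc i.val n (ZMod.val_lt i) (by omega) hival]
          rw [show (⟨n, by omega⟩ : Fin (n + 1)) = Fin.last n from rfl]
          exact hwl
        have heq2 : c (i + 1) = v := by
          simp only [hc]
          rw [hwc _ 0 (ZMod.val_lt _) (by omega) h1]
          rw [show (⟨0, by omega⟩ : Fin (n + 1)) = 0 from rfl]
          exact hw0
        rw [heq1, heq2]
        exact hav
    have hcyc : HasCycleLen A (n + 1) :=
      ⟨by omega, c, hinj, fun i => Set.mem_univ _, harc⟩
    have := hgmin (n + 1) hcyc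
    omega
  -- k * (g - 1) ≥ t + 1
  have hkg : t + 1 ≤ k * (g - 1) := by
    have hq : ((t : ℚ) + 1) / ((g : ℚ) - 1) ≤ (k : ℚ) := hk ▸ Nat.le_ceil _
    have hgpos : (0 : ℚ) < (g : ℚ) - 1 := by
      have : (2 : ℚ) ≤ (g : ℚ) := by exact_mod_cast hg2
      linarith
    have h3 := (div_le_iff₀ hgpos).1 hq
    have h4 : ((t + 1 : ℕ) : ℚ) ≤ ((k * (g - 1) : ℕ) : ℚ) := by
      push_cast [Nat.cast_sub (show 1 ≤ g by omega)]
      linarith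
    exact_mod_cast h4
  refine ⟨?_, ?_, ?_, fun h _ => hback h⟩
  · -- partition existence
    intro v
    have hvt : d v ≤ t := htmax v (d v) (hd v)
    refine ⟨d v / (g - 1), ?_, ?_⟩
    · by_contra hcon
      push_neg at hcon
      have h1 : k * (g - 1) ≤ d v / (g - 1) * (g - 1) := Nat.mul_le_mul_right _ hcon
      have h2 : d v / (g - 1) * (g - 1) ≤ d v := Nat.div_mul_le_self _ _
      omega
    · rw [hU]
      refine ⟨d v, hd v, ?_, ?_⟩
      · exact Nat.div_mul_le_self _ _
      · have hdm := Nat.div_add_mod (d v) (g - 1)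
        have hcm : (g - 1) * (d v / (g - 1)) = d v / (g - 1) * (g - 1) := Nat.mul_comm _ _
        have hmod : d v % (g - 1) < g - 1 := Nat.mod_lt _ (by omega)
        omega
  · -- disjointness
    intro h h' _ _ hne
    ext v
    simp only [Set.mem_inter_iff, Set.mem_empty_iff_false, iff_false, not_and]
    intro hv hv'
    obtain ⟨h1, h2⟩ := hmemU h v hv
    obtain ⟨h1', h2'⟩ := hmemU h' v hv'
    rcases Nat.lt_or_ge h h' with hlt | hge
    · have : (h + 1) * (g - 1) ≤ h' * (g - 1) := Nat.mul_le_mul_right _ hlt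
      have hexp : (h + 1) * (g - 1) = h * (g - 1) + (g - 1) := by ring
      omega
    · have hlt' : h' < h := lt_of_le_of_ne hge (Ne.symm hne)
      have : (h' + 1) * (g - 1) ≤ h * (g - 1) := Nat.mul_le_mul_right _ hlt'
      have hexp : (h' + 1) * (g - 1) = h' * (g - 1) + (g - 1) := by ring
      omega
  · -- acyclicity
    intro h _ ℓ hcyc
    obtain ⟨hℓ, u, hinj, hmem, harcs⟩ := hcyc
    obtain ⟨i, hbi⟩ := hDFS ℓ u hℓ hinj harcs
    exact hback h _ _ hbi (hmem i) (hmem (i + 1))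
end
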